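/- arXiv:1303.4345 — 5 statements merged into one kernel-verified Lean document; each statement's English description precedes it below -/
import Mathlib

section
/- The function λ ↦ spr(A_λ) is monotonically decreasing on (−inf a, ∞): if λ ≥ μ > −inf a then spr(A_λ) ≤ spr(A_μ). -/
/-!
If `0 ≤ S ≤ T` are positive operators on a Banach lattice, then `‖Sⁿ‖ ≤ ‖Tⁿ‖`. For positive `T`
the real spectral radius controls the growth of `‖Tⁿ‖`: for `r > spr T` the resolvent
`(r - T)⁻¹` is positive (a Neumann series for `r > ‖T‖`, and positivity propagates down the
half-line `[r, ∞) ⊆ ρ(T)` because `(t - d - T)⁻¹ = ∑ dᵏ (t - T)⁻ᵏ⁻¹` for small `d ≥ 0`), so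
`Tⁿ ≤ rⁿ⁺¹ (r - T)⁻¹`. With `spr S ≤ liminf ‖Sⁿ‖^(1/n)` this gives `spr S ≤ spr T`.
Finally `A_λ` is positive and `A_μ - A_λ` is `𝒥` followed by multiplication with the
nonnegative function `1 / (μ + a) - 1 / (λ + a)`.
-/

open MeasureTheory ENNReal NNReal Set Filter

theorem spectralRadius_le_of_forall_nnnorm_pow_le {𝕜 A : Type*} [NormedField 𝕜] [NormedRing A]
    [NormedAlgebra 𝕜 A] [CompleteSpace A] (a : A) {x : ℝ≥0∞}
    (h : ∀ r : ℝ≥0, x < r → ∃ C : ℝ≥0, ∀ n, ‖a ^ n‖₊ ≤ C * r ^ n) :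
    spectralRadius 𝕜 a ≤ x := by
  refine (spectrum.spectralRadius_le_liminf_pow_nnnorm_pow_one_div 𝕜 a).trans <|
    le_of_forall_gt_imp_ge_of_dense fun y hxy => ?_
  obtain ⟨r, hxr, hry⟩ := ENNReal.lt_iff_exists_nnreal_btwn.mp hxy
  obtain ⟨C, hC⟩ := h r hxr
  have hr0 : (r : ℝ≥0∞) ≠ 0 := (zero_le.trans_lt hxr).ne'
  have hC_root : ∀ᶠ n : ℕ in atTop, (C : ℝ≥0∞) ^ (1 / n : ℝ) ≤ y / r :=
    ENNReal.eventually_pow_one_div_le coe_ne_top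
      (by rwa [ENNReal.lt_div_iff_mul_lt (.inl hr0) (.inl coe_ne_top), one_mul])
  refine liminf_le_of_frequently_le' <| (hC_root.and (eventually_ne_atTop 0)).frequently.mono ?_
  rintro n ⟨hCn, hn⟩
  calc (‖a ^ n‖₊ : ℝ≥0∞) ^ (1 / n : ℝ) ≤ ((C * r ^ n : ℝ≥0) : ℝ≥0∞) ^ (1 / n : ℝ) :=
        ENNReal.rpow_le_rpow (coe_le_coe.mpr (hC n)) (by positivity)
    _ = (C : ℝ≥0∞) ^ (1 / n : ℝ) * r := by
        rw [coe_mul, ENNReal.mul_rpow_of_nonneg _ _ (by positivity), ENNReal.coe_pow, one_div,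
          ENNReal.pow_rpow_inv_natCast hn]
    _ ≤ y / r * r := by gcongr
    _ = y := ENNReal.div_mul_cancel hr0 coe_ne_top

theorem continuousAt_resolvent {𝕜 A : Type*} [NormedField 𝕜] [NormedRing A] [NormedAlgebra 𝕜 A]
    [HasSummableGeomSeries A] {a : A} {k : 𝕜} (hk : k ∈ resolventSet 𝕜 a) :
    ContinuousAt (resolvent a) k := by
  have h := NormedRing.inverse_continuousAt hk.unit
  rw [hk.unit_spec] at h
  exact h.comp (f := fun k => algebraMap 𝕜 A k - a)
    ((continuous_algebraMap 𝕜 A).sub continuous_const).continuousAt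

section PositiveMap

variable {E : Type*} [NormedAddCommGroup E] [NormedSpace ℝ E]

section PartialOrder

variable [PartialOrder E]

def IsPositiveMap (T : E →L[ℝ] E) : Prop := ∀ ⦃u : E⦄, 0 ≤ u → 0 ≤ T u

theorem isClosed_setOf_isPositiveMap [ClosedIciTopology E] :
    IsClosed {T : E →L[ℝ] E | IsPositiveMap T} := by
  simp only [IsPositiveMap, ofPred_forall]
  exact isClosed_biInter fun u _ =>
    isClosed_Ici.preimage (ContinuousLinearMap.apply ℝ E u).continuous

namespace IsPositiveMap

open spectrum

variable {S T : E →L[ℝ] E}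

theorem zero : IsPositiveMap (0 : E →L[ℝ] E) := fun _ _ => le_rfl

theorem one : IsPositiveMap (1 : E →L[ℝ] E) := fun _ hu => hu

theorem mul (hS : IsPositiveMap S) (hT : IsPositiveMap T) : IsPositiveMap (S * T) :=
  fun _ hu => hS (hT hu)

theorem pow (hT : IsPositiveMap T) (n : ℕ) : IsPositiveMap (T ^ n) := by
  induction n with
  | zero => exact one
  | succ n ih => rw [pow_succ]; exact ih.mul hT

theorem smul [PosSMulMono ℝ E] {c : ℝ} (hc : 0 ≤ c) (hT : IsPositiveMap T) :
    IsPositiveMap (c • T) :=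
  fun _ hu => smul_nonneg hc (hT hu)

variable [IsOrderedAddMonoid E]

theorem monotone (hT : IsPositiveMap T) : Monotone T := fun u v huv => by
  simpa only [map_sub, sub_nonneg] using hT (sub_nonneg.mpr huv)

theorem add (hS : IsPositiveMap S) (hT : IsPositiveMap T) : IsPositiveMap (S + T) :=
  fun _ hu => add_nonneg (hS hu) (hT hu)

theorem of_sub (hS : IsPositiveMap S) (hTS : IsPositiveMap (T - S)) : IsPositiveMap T := by
  simpa using hS.add hTS

theorem apply_le_apply (hTS : IsPositiveMap (T - S)) {u : E} (hu : 0 ≤ u) : S u ≤ T u :=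
  sub_nonneg.mp (hTS hu)

theorem pow_sub_pow (hS : IsPositiveMap S) (hTS : IsPositiveMap (T - S)) (n : ℕ) :
    IsPositiveMap (T ^ n - S ^ n) := by
  induction n with
  | zero => simpa using zero
  | succ n ih =>
    have h : T ^ (n + 1) - S ^ (n + 1) = T * (T ^ n - S ^ n) + (T - S) * S ^ n := by
      rw [pow_succ' T, pow_succ' S]; noncomm_ring
    rw [h]
    exact ((hS.of_sub hTS).mul ih).add (hTS.mul (hS.pow n))

theorem pow_le_smul_resolvent [PosSMulMono ℝ E] {t : ℝ} (hT : IsPositiveMap T)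
    (ht : t ∈ resolventSet ℝ T) (hR : IsPositiveMap (resolvent T t)) (ht₀ : 0 ≤ t) (n : ℕ) :
    IsPositiveMap (t ^ (n + 1) • resolvent T t - T ^ n) := by
  have hid : t • resolvent T t = 1 + T * resolvent T t := by
    have h := Ring.mul_inverse_cancel _ ht
    rw [sub_mul, ← Algebra.smul_def] at h
    exact sub_eq_iff_eq_add.mp h
  induction n with
  | zero => simpa [hid] using hT.mul hR
  | succ n ih =>
    have h : t ^ (n + 2) • resolvent T t - T ^ (n + 1) =
        t ^ (n + 1) • (1 : E →L[ℝ] E) + T * (t ^ (n + 1) • resolvent T t - T ^ n) := by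
      rw [pow_succ t (n + 1), mul_smul, hid, mul_sub, mul_smul_comm, smul_add, pow_succ' T n]
      abel
    rw [h]
    exact (one.smul (by positivity)).add (hT.mul ih)

variable [ClosedIciTopology E]

theorem tsum {f : ℕ → E →L[ℝ] E} (hf : ∀ n, IsPositiveMap (f n)) :
    IsPositiveMap (∑' n, f n) := by
  by_cases hsum : Summable f
  · exact isClosed_setOf_isPositiveMap.mem_of_tendsto hsum.hasSum.tendsto_sum_nat <|
      .of_forall fun n => Finset.sum_induction f IsPositiveMap (fun _ _ => add) zero fun k _ => hf k
  · rw [tsum_eq_zero_of_not_summable hsum]; exact zero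

variable [PosSMulMono ℝ E] [CompleteSpace E]

theorem resolvent_of_norm_lt (hT : IsPositiveMap T) {t : ℝ} (ht : ‖T‖ < t) :
    IsPositiveMap (resolvent T t) := by
  have ht0 : 0 < t := (norm_nonneg T).trans_lt ht
  have hsmall : ‖t⁻¹ • T‖ < 1 := by
    rw [norm_smul, norm_inv, Real.norm_of_nonneg ht0.le, inv_mul_lt_one₀ ht0]
    exact ht
  have h : t • resolvent T t = ∑' n, (t⁻¹ • T) ^ n := by
    simpa [resolvent, Units.smul_def, geom_series_eq_inverse _ hsmall] using
      units_smul_resolvent_self (r := Units.mk0 t ht0.ne') (a := T)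
  rw [← inv_smul_smul₀ ht0.ne' (resolvent T t), h]
  exact .smul (inv_nonneg.mpr ht0.le) (.tsum fun n => (hT.smul (inv_nonneg.mpr ht0.le)).pow n)

theorem resolvent_sub {t d : ℝ} (ht : t ∈ resolventSet ℝ T) (hR : IsPositiveMap (resolvent T t))
    (hd : 0 ≤ d) (hdR : d * ‖resolvent T t‖ < 1) : IsPositiveMap (resolvent T (t - d)) := by
  set R := resolvent T t with hRdef
  have hsmall : ‖d • R‖ < 1 := by rwa [norm_smul, Real.norm_of_nonneg hd]
  have hfactor : algebraMap ℝ _ (t - d) - T = (algebraMap ℝ _ t - T) * (1 - d • R) := by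
    rw [mul_sub, mul_one, mul_smul_comm, hRdef, resolvent, Ring.mul_inverse_cancel _ ht, map_sub,
      Algebra.algebraMap_eq_smul_one d]
    abel
  rw [resolvent, hfactor, Ring.inverse_mul (.inl ht), ← geom_series_eq_inverse _ hsmall]
  exact (IsPositiveMap.tsum fun n => (hR.smul hd).pow n).mul hR

end IsPositiveMap

end PartialOrder

namespace IsPositiveMap

open spectrum

variable [Lattice E] [IsOrderedAddMonoid E] {S T : E →L[ℝ] E}

theorem abs_apply_le (hT : IsPositiveMap T) (u : E) : |T u| ≤ T |u| :=
  sup_le (hT.monotone (le_abs_self u)) (by rw [← map_neg]; exact hT.monotone (neg_le_abs u))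

variable [HasSolidNorm E]

theorem norm_le (hS : IsPositiveMap S) (hTS : IsPositiveMap (T - S)) : ‖S‖ ≤ ‖T‖ := by
  refine S.opNorm_le_bound (norm_nonneg T) fun u => ?_
  calc ‖S u‖ ≤ ‖T |u|‖ := norm_le_norm_of_abs_le_abs <| by
        rw [abs_of_nonneg ((hS.of_sub hTS) (abs_nonneg u))]
        exact (hS.abs_apply_le u).trans (hTS.apply_le_apply (abs_nonneg u))
    _ ≤ ‖T‖ * ‖|u|‖ := T.le_opNorm _
    _ = ‖T‖ * ‖u‖ := by rw [norm_abs_eq_norm]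

variable [PosSMulMono ℝ E] [CompleteSpace E]

theorem resolvent_of_spectralRadius_lt (hT : IsPositiveMap T) {r : ℝ≥0}
    (hr : spectralRadius ℝ T < r) : IsPositiveMap (resolvent T (r : ℝ)) := by
  have hρ : ∀ t : ℝ, r ≤ t → t ∈ resolventSet ℝ T := fun t ht =>
    mem_resolventSet_of_spectralRadius_lt <| hr.trans_le <| coe_le_coe.mpr <| by
      rw [← NNReal.coe_le_coe, coe_nnnorm]; exact ht.trans (Real.le_norm_self t)
  set t₀ : ℝ := r + ‖T‖ + 1
  have hcl : IsClosed ({t : ℝ | IsPositiveMap (resolvent T t)} ∩ Icc (r : ℝ) t₀) := by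
    rw [inter_comm]
    exact ContinuousOn.preimage_isClosed_of_isClosed
      (fun t ht => (continuousAt_resolvent (hρ t ht.1)).continuousWithinAt) isClosed_Icc
      isClosed_setOf_isPositiveMap
  refine hcl.mem_of_ge_of_forall_exists_lt (hT.resolvent_of_norm_lt (by linarith [r.coe_nonneg]))
    (by linarith [norm_nonneg T]) fun x ⟨hx, hrx, _⟩ => ?_
  set d := min (x - r) (‖resolvent T x‖ + 1)⁻¹
  have hd : 0 < d := lt_min (sub_pos.mpr hrx) (by positivity)
  have hdR : d * ‖resolvent T x‖ < 1 := calc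
    d * ‖resolvent T x‖ ≤ (‖resolvent T x‖ + 1)⁻¹ * ‖resolvent T x‖ := by
      gcongr; exact min_le_right _ _
    _ < 1 := by rw [inv_mul_lt_one₀ (by positivity)]; linarith
  exact ⟨x - d, hx.resolvent_sub (hρ x hrx.le) hd.le hdR,
    by linarith [min_le_left (x - r) (‖resolvent T x‖ + 1)⁻¹], by linarith⟩

theorem norm_pow_le_of_spectralRadius_lt (hT : IsPositiveMap T) {r : ℝ≥0}
    (hr : spectralRadius ℝ T < r) (n : ℕ) : ‖T ^ n‖ ≤ r ^ (n + 1) * ‖resolvent T (r : ℝ)‖ := by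
  have hρ : (r : ℝ) ∈ resolventSet ℝ T :=
    mem_resolventSet_of_spectralRadius_lt (by rwa [NNReal.nnnorm_eq])
  calc ‖T ^ n‖ ≤ ‖(r : ℝ) ^ (n + 1) • resolvent T (r : ℝ)‖ :=
        (hT.pow n).norm_le
          (hT.pow_le_smul_resolvent hρ (hT.resolvent_of_spectralRadius_lt hr) r.2 n)
    _ = r ^ (n + 1) * ‖resolvent T (r : ℝ)‖ := by
        rw [norm_smul, Real.norm_of_nonneg (by positivity)]

theorem spectralRadius_le (hS : IsPositiveMap S) (hTS : IsPositiveMap (T - S)) :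
    spectralRadius ℝ S ≤ spectralRadius ℝ T :=
  spectralRadius_le_of_forall_nnnorm_pow_le S fun r hr => ⟨r * ‖resolvent T (r : ℝ)‖₊, fun n => by
    rw [← NNReal.coe_le_coe]
    push_cast
    calc ‖S ^ n‖ ≤ ‖T ^ n‖ := (hS.pow n).norm_le (hS.pow_sub_pow hTS n)
      _ ≤ r ^ (n + 1) * ‖resolvent T (r : ℝ)‖ :=
        (hS.of_sub hTS).norm_pow_le_of_spectralRadius_lt hr n
      _ = r * ‖resolvent T (r : ℝ)‖ * r ^ n := by ring⟩

end IsPositiveMap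

end PositiveMap

section Lp

variable {α : Type*} [MeasurableSpace α] {ν : Measure α} {p : ℝ≥0∞}

instance Lp.instPosSMulMono {E : Type*} [NormedAddCommGroup E] [PartialOrder E] [NormedSpace ℝ E]
    [PosSMulMono ℝ E] : PosSMulMono ℝ (Lp E p ν) where
  smul_le_smul_of_nonneg_left c hc f g hfg := by
    rw [← Lp.coeFn_le] at hfg ⊢
    filter_upwards [hfg, Lp.coeFn_smul c f, Lp.coeFn_smul c g] with x hx hcf hcg
    rw [hcf, hcg]
    exact smul_le_smul_of_nonneg_left hx hc

theorem IsPositiveMap.of_ae_eq_mul [Fact (1 ≤ p)] {S T : Lp ℝ p ν →L[ℝ] Lp ℝ p ν}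
    (hS : IsPositiveMap S) {w : α → ℝ} (hw : 0 ≤ᵐ[ν] w)
    (h : ∀ u, ⇑(T u) =ᵐ[ν] fun x => w x * S u x) : IsPositiveMap T := fun u hu => by
  rw [← Lp.coeFn_nonneg]
  filter_upwards [h u, hw, (Lp.coeFn_nonneg _).mpr (hS hu)] with x hx hwx hSx
  rw [hx]
  exact mul_nonneg hwx hSx

theorem isPositiveMap_of_ae_eq_integral [Fact (1 ≤ p)] {T : Lp ℝ p ν →L[ℝ] Lp ℝ p ν}
    {J : α → α → ℝ} (hJ : ∀ x y, 0 ≤ J x y)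
    (h : ∀ u, ⇑(T u) =ᵐ[ν] fun x => ∫ y, J x y * u y ∂ν) : IsPositiveMap T := fun u hu => by
  rw [← Lp.coeFn_nonneg] at hu ⊢
  filter_upwards [h u] with x hx
  rw [hx]
  exact integral_nonneg_of_ae (hu.mono fun y hy => mul_nonneg (hJ x y) hy)

end Lp

theorem stmt_7_general
    (Ω : Set ℝ) (hΩ : MeasurableSet Ω)
    (a : ℝ → ℝ)
    (c c' : ℝ)
    (hbound : ∀ x ∈ Ω, c < a x ∧ a x < c')
    (J : ℝ → ℝ → ℝ)
    (hJnonneg : ∀ x y, 0 ≤ J x y)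
    (𝒥 : Lp ℝ 1 (volume.restrict Ω) →L[ℝ] Lp ℝ 1 (volume.restrict Ω))
    (h𝒥 : ∀ u : Lp ℝ 1 (volume.restrict Ω),
      ⇑(𝒥 u) =ᵐ[volume.restrict Ω] fun x => ∫ y in Ω, J x y * u y)
    (A : ℝ → (Lp ℝ 1 (volume.restrict Ω) →L[ℝ] Lp ℝ 1 (volume.restrict Ω)))
    (hA : ∀ l : ℝ, -sInf (a '' Ω) < l → ∀ u : Lp ℝ 1 (volume.restrict Ω),
      ⇑(A l u) =ᵐ[volume.restrict Ω] fun x => (𝒥 u) x / (l + a x))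
    (l m : ℝ) (hm : -sInf (a '' Ω) < m) (hlm : m ≤ l) :
    spectralRadius ℝ (A l) ≤ spectralRadius ℝ (A m) := by
  have hden : ∀ t, -sInf (a '' Ω) < t → ∀ x ∈ Ω, 0 < t + a x := fun t ht x hx => by
    have hinf := csInf_le ⟨c, forall_mem_image.mpr fun y hy => (hbound y hy).1.le⟩
      (mem_image_of_mem a hx)
    linarith
  have hl : -sInf (a '' Ω) < l := hm.trans_le hlm
  have h𝒥pos : IsPositiveMap 𝒥 := isPositiveMap_of_ae_eq_integral hJnonneg h𝒥
  have hAl : IsPositiveMap (A l) := h𝒥pos.of_ae_eq_mul (w := fun x => (l + a x)⁻¹)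
    (ae_restrict_of_forall_mem hΩ fun x hx => (inv_pos.mpr (hden l hl x hx)).le)
    fun u => (hA l hl u).mono fun x hx => hx.trans (div_eq_inv_mul _ _)
  have hAml : IsPositiveMap (A m - A l) :=
    h𝒥pos.of_ae_eq_mul (w := fun x => (m + a x)⁻¹ - (l + a x)⁻¹)
      (ae_restrict_of_forall_mem hΩ fun x hx =>
        sub_nonneg.mpr (inv_anti₀ (hden m hm x hx) (by linarith)))
      fun u => by
        filter_upwards [Lp.coeFn_sub (A m u) (A l u), hA m hm u, hA l hl u] with x hx hmx hlx
        rw [sub_apply, hx, Pi.sub_apply, hmx, hlx]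
        ring
  exact hAl.spectralRadius_le hAml

/-- λ ↦ spr(A_λ) is monotonically decreasing on (−inf a, ∞):
if λ ≥ μ > −inf a then spr(A_λ) ≤ spr(A_μ). -/
theorem stmt_7
    (Ω : Set ℝ) (hΩ : MeasurableSet Ω)
    (a : ℝ → ℝ) (ha : Continuous a)
    (c c' : ℝ) (hc0 : 0 < c) (hcc' : c < c')
    (hbound : ∀ x ∈ Ω, c < a x ∧ a x < c')
    (J : ℝ → ℝ → ℝ) (hJmeas : Measurable (Function.uncurry J))
    (hJnonneg : ∀ x y, 0 ≤ J x y)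
    (𝒥 : Lp ℝ 1 (volume.restrict Ω) →L[ℝ] Lp ℝ 1 (volume.restrict Ω))
    (h𝒥 : ∀ u : Lp ℝ 1 (volume.restrict Ω),
      ⇑(𝒥 u) =ᵐ[volume.restrict Ω] fun x => ∫ y in Ω, J x y * u y)
    (A : ℝ → (Lp ℝ 1 (volume.restrict Ω) →L[ℝ] Lp ℝ 1 (volume.restrict Ω)))
    (hA : ∀ l : ℝ, -sInf (a '' Ω) < l → ∀ u : Lp ℝ 1 (volume.restrict Ω),
      ⇑(A l u) =ᵐ[volume.restrict Ω] fun x => (𝒥 u) x / (l + a x))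
    (l m : ℝ) (hm : -sInf (a '' Ω) < m) (hlm : m ≤ l) :
    spectralRadius ℝ (A l) ≤ spectralRadius ℝ (A m) :=
  stmt_7_general Ω hΩ a c c' hbound J hJnonneg 𝒥 h𝒥 A hA l m hm hlm
end

section
/- The function λ ↦ spr(A_λ) is continuous on the interval (−inf a, ∞). -/
/-!
A positive operator `T` on a real Banach lattice has `spectralRadius ℝ T = ⨅ n, ‖Tⁿ‖^(1/n)`.
Indeed, for `μ > spectralRadius ℝ T` the resolvent `R(μ) = (μ - T)⁻¹` is positive: it is a
positive Neumann series for `μ > ‖T‖`, positivity is a closed condition, and near `ν₀`, for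
`ν ≤ ν₀`, `R(ν) = (1 - (ν₀ - ν) R(ν₀))⁻¹ R(ν₀)` is again a positive Neumann series. Then
`μ R(μ) = 1 + T R(μ)` gives `Tᵏ ≤ μᵏ⁺¹ R(μ)`, hence `⨅ k, ‖Tᵏ‖^(1/k) ≤ μ`.

Consequently the real spectral radius is monotone under domination of positive operators and
positively homogeneous. With `m = inf a`, the operator `A_λ` decreases in `λ` while
`(λ + m) A_λ` increases, because `(λ + m) / (λ + a x)` does; so `f λ = spr A_λ` is antitone and
`(λ + m) f λ` is monotone, which squeezes `f` to be continuous.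
-/

open MeasureTheory ENNReal Set Filter Topology
open scoped NNReal

section GelfandRadius

variable {A : Type*} [NormedRing A]

noncomputable def gelfandRadius (a : A) : ℝ≥0∞ :=
  ⨅ n : ℕ, (‖a ^ (n + 1)‖₊ : ℝ≥0∞) ^ (1 / (n + 1 : ℝ))

theorem gelfandRadius_le_nnnorm_pow (a : A) (n : ℕ) :
    gelfandRadius a ≤ (‖a ^ (n + 1)‖₊ : ℝ≥0∞) ^ (1 / (n + 1 : ℝ)) :=
  iInf_le _ n

theorem gelfandRadius_ne_top (a : A) : gelfandRadius a ≠ ∞ :=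
  ne_top_of_le_ne_top (by simp) (gelfandRadius_le_nnnorm_pow a 0)

theorem gelfandRadius_le_of_nnnorm_pow_le {a : A} {C μ : ℝ≥0}
    (h : ∀ n, ‖a ^ n‖₊ ≤ C * μ ^ n) : gelfandRadius a ≤ μ := by
  have hlim : Tendsto (fun n : ℕ => (((C + 1) ^ (1 / (n + 1 : ℝ)) * μ : ℝ≥0) : ℝ≥0∞))
      atTop (𝓝 μ) := by
    have hexp : Tendsto (fun n : ℕ => 1 / ((n : ℝ) + 1)) atTop (𝓝 0) :=
      tendsto_one_div_add_atTop_nhds_zero_nat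
    have hreal :=
      (Real.continuousAt_const_rpow (by positivity : ((C + 1 : ℝ≥0) : ℝ) ≠ 0)).tendsto.comp hexp
    have hnn : Tendsto (fun n : ℕ => (C + 1) ^ (1 / (n + 1 : ℝ))) atTop (𝓝 1) := by
      rw [← NNReal.tendsto_coe]
      simpa [Function.comp_def] using hreal
    simpa using ENNReal.tendsto_coe.2 (hnn.mul_const μ)
  refine ge_of_tendsto' hlim fun n => (gelfandRadius_le_nnnorm_pow a n).trans ?_
  have hn : (n + 1 : ℝ) ≠ 0 := by positivity
  calc (‖a ^ (n + 1)‖₊ : ℝ≥0∞) ^ (1 / (n + 1 : ℝ))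
      ≤ (((C + 1) * μ ^ (n + 1) : ℝ≥0) : ℝ≥0∞) ^ (1 / (n + 1 : ℝ)) := by
        gcongr
        exact (h _).trans (by gcongr; exact le_self_add)
    _ = (((C + 1) ^ (1 / (n + 1 : ℝ)) * μ : ℝ≥0) : ℝ≥0∞) := by
        rw [← ENNReal.coe_rpow_of_nonneg _ (by positivity), NNReal.mul_rpow]
        congr
        rw [← NNReal.rpow_natCast, ← NNReal.rpow_mul]
        simp [hn]

theorem gelfandRadius_smul {𝕜 : Type*} [NormedField 𝕜] [NormedAlgebra 𝕜 A] (c : 𝕜) (a : A) :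
    gelfandRadius (c • a) = ‖c‖₊ * gelfandRadius a := by
  rw [gelfandRadius, gelfandRadius, ENNReal.mul_iInf (by simp)]
  congr 1 with n
  have hn : (n + 1 : ℝ) ≠ 0 := by positivity
  rw [smul_pow, nnnorm_smul, nnnorm_pow, ENNReal.coe_mul,
    ENNReal.mul_rpow_of_nonneg _ _ (by positivity), ENNReal.coe_pow, ← ENNReal.rpow_natCast,
    ← ENNReal.rpow_mul]
  simp [hn]

theorem spectralRadius_le_gelfandRadius {𝕜 E : Type*} [NontriviallyNormedField 𝕜]
    [NormedAddCommGroup E] [NormedSpace 𝕜 E] [CompleteSpace E] (T : E →L[𝕜] E) :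
    spectralRadius 𝕜 T ≤ gelfandRadius T := by
  refine le_iInf fun n => (spectrum.spectralRadius_le_pow_nnnorm_pow_one_div 𝕜 T n).trans ?_
  have h1 : (‖(1 : E →L[𝕜] E)‖₊ : ℝ≥0∞) ≤ 1 := by
    exact_mod_cast ContinuousLinearMap.norm_id_le
  calc _ ≤ (‖T ^ (n + 1)‖₊ : ℝ≥0∞) ^ (1 / (n + 1) : ℝ) * 1 ^ (1 / (n + 1) : ℝ) := by gcongr
    _ = _ := by simp

theorem spectralRadius_ne_top {𝕜 E : Type*} [NontriviallyNormedField 𝕜]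
    [NormedAddCommGroup E] [NormedSpace 𝕜 E] [CompleteSpace E] (T : E →L[𝕜] E) :
    spectralRadius 𝕜 T ≠ ∞ :=
  ne_top_of_le_ne_top (gelfandRadius_ne_top T) (spectralRadius_le_gelfandRadius T)

end GelfandRadius

theorem mem_resolventSet_of_spectralRadius_lt_of_le {A : Type*} [Ring A] [Algebra ℝ A] {a : A}
    {μ : ℝ≥0} (hμ : spectralRadius ℝ a < μ) {ν : ℝ} (hν : μ ≤ ν) : ν ∈ resolventSet ℝ a :=
  spectrum.mem_resolventSet_of_spectralRadius_lt <| hμ.trans_le <| by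
    rw [ENNReal.coe_le_coe, ← NNReal.coe_le_coe, coe_nnnorm, Real.norm_eq_abs]
    exact hν.trans (le_abs_self ν)

theorem resolvent_eq_inverse_one_sub_mul {R A : Type*} [CommRing R] [Ring A] [Algebra R A]
    {a : A} {ν₀ : R} (h₀ : ν₀ ∈ resolventSet R a) (ν : R) :
    resolvent a ν = Ring.inverse (1 - (ν₀ - ν) • resolvent a ν₀) * resolvent a ν₀ := by
  have hright : (algebraMap R A ν₀ - a) * resolvent a ν₀ = 1 := Ring.mul_inverse_cancel _ h₀
  have hleft : resolvent a ν₀ * (algebraMap R A ν₀ - a) = 1 := Ring.inverse_mul_cancel _ h₀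
  have hfac : algebraMap R A ν - a
      = (algebraMap R A ν₀ - a) * (1 - (ν₀ - ν) • resolvent a ν₀) := by
    rw [mul_sub, mul_one, mul_smul_comm, hright, Algebra.algebraMap_eq_smul_one,
      Algebra.algebraMap_eq_smul_one, sub_smul]
    abel
  have hcomm : Commute (algebraMap R A ν₀ - a) (1 - (ν₀ - ν) • resolvent a ν₀) :=
    (Commute.one_right _).sub_right (Commute.smul_right (hright.trans hleft.symm) _)
  rw [resolvent, hfac, Ring.mul_inverse_rev' hcomm]
  rfl

/- Positivity of an operator on a vector lattice is expressed as `Monotone T`; for linear maps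
the two notions agree (`monotone_iff_map_nonneg`). -/
namespace ContinuousLinearMap

variable {X : Type*} [NormedAddCommGroup X] [Lattice X] [NormedSpace ℝ X]

theorem monotone_pow {T : X →L[ℝ] X} (hT : Monotone T) (n : ℕ) : Monotone ⇑(T ^ n) := by
  rw [FunLike.coe_pow_eq_iterate]
  exact hT.iterate n

theorem abs_apply_le {T : X →L[ℝ] X} (hT : Monotone T) (u : X) : |T u| ≤ T |u| :=
  abs_le'.2 ⟨hT (le_abs_self u), by simpa using hT (neg_le_abs u)⟩

theorem pow_apply_le_pow_apply {S T : X →L[ℝ] X} (hS : Monotone S)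
    (hST : ∀ u, 0 ≤ u → S u ≤ T u) (n : ℕ) {u : X} (hu : 0 ≤ u) : (S ^ n) u ≤ (T ^ n) u := by
  induction n with
  | zero => simp
  | succ n ih =>
    have hSn : 0 ≤ (S ^ n) u := by simpa using monotone_pow hS n hu
    rw [pow_succ', pow_succ']
    exact (hS ih).trans (hST _ (hSn.trans ih))

theorem isClosed_setOf_monotone [OrderClosedTopology X] :
    IsClosed {T : X →L[ℝ] X | Monotone T} := by
  simp only [Monotone, ofPred_forall]
  exact isClosed_iInter fun u => isClosed_iInter fun v => isClosed_iInter fun _ =>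
    isClosed_le (continuous_eval_const u) (continuous_eval_const v)

variable [IsOrderedAddMonoid X]

theorem norm_le_norm_of_apply_le [HasSolidNorm X] {S T : X →L[ℝ] X} (hS : Monotone S)
    (hST : ∀ u, 0 ≤ u → S u ≤ T u) : ‖S‖ ≤ ‖T‖ := by
  refine S.opNorm_le_bound (norm_nonneg T) fun u => ?_
  have hSu : 0 ≤ S |u| := by simpa using hS (abs_nonneg u)
  calc ‖S u‖ ≤ ‖S |u|‖ := HasSolidNorm.solid ((abs_apply_le hS u).trans (le_abs_self _))
    _ ≤ ‖T |u|‖ := by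
        refine HasSolidNorm.solid ?_
        rw [abs_of_nonneg hSu, abs_of_nonneg (hSu.trans (hST _ (abs_nonneg u)))]
        exact hST _ (abs_nonneg u)
    _ ≤ ‖T‖ * ‖u‖ := by simpa [norm_abs_eq_norm] using T.le_opNorm |u|

theorem monotone_inverse_one_sub [OrderClosedTopology X] [CompleteSpace X] {w : X →L[ℝ] X}
    (hw : Monotone w) (hnorm : ‖w‖ < 1) : Monotone ⇑(Ring.inverse (1 - w)) := by
  rw [← geom_series_eq_inverse w hnorm]
  refine isClosed_setOf_monotone.mem_of_tendsto
    (summable_geometric_of_norm_lt_one hnorm).hasSum.tendsto_sum_nat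
    (Eventually.of_forall fun n => (monotone_iff_map_nonneg _).2 fun u hu => ?_)
  rw [sum_apply]
  exact Finset.sum_nonneg fun i _ => by simpa using monotone_pow hw i hu

end ContinuousLinearMap

section PositiveOperator

variable {X : Type*} [NormedAddCommGroup X] [Lattice X] [NormedSpace ℝ X] [IsOrderedAddMonoid X]

theorem gelfandRadius_le_gelfandRadius [HasSolidNorm X] {S T : X →L[ℝ] X} (hS : Monotone S)
    (hST : ∀ u, 0 ≤ u → S u ≤ T u) : gelfandRadius S ≤ gelfandRadius T := by
  refine iInf_mono fun n => ENNReal.rpow_le_rpow ?_ (by positivity)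
  have h := ContinuousLinearMap.norm_le_norm_of_apply_le (ContinuousLinearMap.monotone_pow hS _)
    fun u hu => ContinuousLinearMap.pow_apply_le_pow_apply hS hST (n + 1) hu
  exact_mod_cast h

variable [PosSMulMono ℝ X]

theorem pow_apply_le_smul_resolvent_apply {T : X →L[ℝ] X} (hT : Monotone T) {μ : ℝ}
    (hμ : 0 ≤ μ) (hρ : μ ∈ resolventSet ℝ T) (hR : Monotone ⇑(resolvent T μ)) (k : ℕ) {u : X}
    (hu : 0 ≤ u) : (T ^ k) u ≤ μ ^ (k + 1) • resolvent T μ u := by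
  set R := resolvent T μ
  have hres : μ • R u = u + T (R u) := by
    have h := congrArg (fun S : X →L[ℝ] X => S u) (hρ.mul_val_inv)
    rw [← spectrum.resolvent_eq hρ] at h
    simp only [Algebra.algebraMap_eq_smul_one] at h
    exact sub_eq_iff_eq_add.1 h
  have hTR : 0 ≤ T (R u) := by simpa using hT (by simpa using hR hu : 0 ≤ R u)
  induction k with
  | zero => simpa [hres] using hTR
  | succ k ih =>
    calc (T ^ (k + 1)) u = T ((T ^ k) u) := by rw [pow_succ']; rfl
      _ ≤ T (μ ^ (k + 1) • R u) := hT ih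
      _ = μ ^ (k + 1) • T (R u) := map_smul _ _ _
      _ ≤ μ ^ (k + 1) • (μ • R u) := by
          rw [hres]
          exact smul_le_smul_of_nonneg_left (le_add_of_nonneg_left hu) (by positivity)
      _ = μ ^ (k + 1 + 1) • R u := by rw [smul_smul, ← pow_succ]

variable [OrderClosedTopology X] [CompleteSpace X]

theorem monotone_resolvent_of_norm_lt {T : X →L[ℝ] X} (hT : Monotone T) {ν : ℝ}
    (hν : ‖T‖ < ν) : Monotone ⇑(resolvent T ν) := by
  have hν0 : 0 < ν := (norm_nonneg T).trans_lt hν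
  have hinv : ‖ν⁻¹ • T‖ < 1 := by
    rw [norm_smul, norm_inv, Real.norm_of_nonneg hν0.le, inv_mul_lt_one₀ hν0]
    exact hν
  have h : ν • resolvent T ν = Ring.inverse (1 - ν⁻¹ • T) := by
    simpa [Units.smul_def, resolvent] using
      spectrum.units_smul_resolvent_self (r := Units.mk0 ν hν0.ne') (a := T)
  have hmono : Monotone ⇑(ν • resolvent T ν) := by
    rw [h]
    exact ContinuousLinearMap.monotone_inverse_one_sub (hT.const_smul (inv_nonneg.2 hν0.le)) hinv
  simpa [smul_smul, inv_mul_cancel₀ hν0.ne'] using hmono.const_smul (inv_nonneg.2 hν0.le)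

theorem monotone_resolvent_of_le {T : X →L[ℝ] X} {ν₀ ν : ℝ} (h₀ : ν₀ ∈ resolventSet ℝ T)
    (hR : Monotone ⇑(resolvent T ν₀)) (hν : ν ≤ ν₀) (hδ : (ν₀ - ν) * ‖resolvent T ν₀‖ < 1) :
    Monotone ⇑(resolvent T ν) := by
  set w := (ν₀ - ν) • resolvent T ν₀
  have hw : ‖w‖ < 1 := by
    rwa [norm_smul, Real.norm_of_nonneg (sub_nonneg.2 hν)]
  rw [resolvent_eq_inverse_one_sub_mul h₀ ν]
  exact (ContinuousLinearMap.monotone_inverse_one_sub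
    (hR.const_smul (sub_nonneg.2 hν)) hw).comp hR

theorem monotone_resolvent_of_spectralRadius_lt {T : X →L[ℝ] X} (hT : Monotone T) {μ : ℝ≥0}
    (hμ : spectralRadius ℝ T < μ) : Monotone ⇑(resolvent T (μ : ℝ)) := by
  set M : ℝ := max μ (‖T‖ + 1)
  have hμM : (μ : ℝ) ≤ M := le_max_left _ _
  have hρ : ∀ t ≤ M - μ, M - t ∈ resolventSet ℝ T := fun t ht =>
    mem_resolventSet_of_spectralRadius_lt_of_le hμ (by linarith)
  -- continuous induction on `t ∈ [0, M - μ]`, descending from `ν = M` to `ν = μ` along `ν = M - t`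
  set S := {t : ℝ | Monotone ⇑(resolvent T (M - t))}
  have hS0 : (0 : ℝ) ∈ S := by
    simpa [S] using monotone_resolvent_of_norm_lt hT ((lt_add_one _).trans_le (le_max_right _ _))
  have hclosed : IsClosed (S ∩ Icc 0 (M - μ)) := by
    rw [inter_comm]
    refine ContinuousOn.preimage_isClosed_of_isClosed (f := fun t => resolvent T (M - t))
      (fun t ht => ?_) isClosed_Icc
      ContinuousLinearMap.isClosed_setOf_monotone
    have h := (spectrum.hasDerivAt_resolvent_const_left (hρ t ht.2)).continuousAt
    exact (h.comp (continuous_sub_left M).continuousAt).continuousWithinAt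
  have hstep : ∀ t ∈ S ∩ Ico 0 (M - μ), S ∈ 𝓝[>] t := by
    rintro t ⟨htS, ht⟩
    set R := resolvent T (M - t)
    have hnear : Iio (t + 1 / (‖R‖ + 1)) ∈ 𝓝[>] t :=
      nhdsWithin_le_nhds (Iio_mem_nhds (lt_add_of_pos_right t (by positivity)))
    filter_upwards [hnear, self_mem_nhdsWithin] with t' ht' htt'
    refine monotone_resolvent_of_le (hρ t ht.2.le) htS (ν := M - t')
      (by linarith [mem_Ioi.1 htt']) ?_
    rw [show M - t - (M - t') = t' - t by ring]
    calc (t' - t) * ‖R‖ ≤ (t' - t) * (‖R‖ + 1) := by nlinarith [mem_Ioi.1 htt']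
      _ < 1 := by
        rw [← lt_div_iff₀ (by positivity)]
        linarith [mem_Iio.1 ht']
  have hmem := hclosed.Icc_subset_of_forall_mem_nhdsWithin hS0 hstep
    (right_mem_Icc.2 (sub_nonneg.2 hμM))
  simpa [S] using hmem

variable [HasSolidNorm X]

theorem gelfandRadius_le_spectralRadius {T : X →L[ℝ] X} (hT : Monotone T) :
    gelfandRadius T ≤ spectralRadius ℝ T := by
  refine le_of_forall_gt_imp_ge_of_dense fun c hc => ?_
  obtain ⟨μ, hsμ, hμc⟩ := ENNReal.lt_iff_exists_nnreal_btwn.1 hc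
  refine le_trans ?_ hμc.le
  have hρ : (μ : ℝ) ∈ resolventSet ℝ T := mem_resolventSet_of_spectralRadius_lt_of_le hsμ le_rfl
  have hR := monotone_resolvent_of_spectralRadius_lt hT hsμ
  refine gelfandRadius_le_of_nnnorm_pow_le (C := μ * ‖resolvent T (μ : ℝ)‖₊) fun n => ?_
  have h := ContinuousLinearMap.norm_le_norm_of_apply_le (ContinuousLinearMap.monotone_pow hT n)
    (T := (μ : ℝ) ^ (n + 1) • resolvent T (μ : ℝ))
    fun u hu => pow_apply_le_smul_resolvent_apply hT μ.2 hρ hR n hu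
  rw [norm_smul] at h
  rw [← NNReal.coe_le_coe]
  push_cast
  calc ‖T ^ n‖ ≤ _ := h
    _ = _ := by rw [Real.norm_of_nonneg (by positivity)]; ring

theorem spectralRadius_eq_gelfandRadius {T : X →L[ℝ] X} (hT : Monotone T) :
    spectralRadius ℝ T = gelfandRadius T :=
  (spectralRadius_le_gelfandRadius T).antisymm (gelfandRadius_le_spectralRadius hT)

theorem spectralRadius_le_spectralRadius {S T : X →L[ℝ] X} (hS : Monotone S)
    (hST : ∀ u, 0 ≤ u → S u ≤ T u) : spectralRadius ℝ S ≤ spectralRadius ℝ T := by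
  have hT : Monotone T := (monotone_iff_map_nonneg T).2 fun u hu =>
    ((monotone_iff_map_nonneg S).1 hS u hu).trans (hST u hu)
  rw [spectralRadius_eq_gelfandRadius hS, spectralRadius_eq_gelfandRadius hT]
  exact gelfandRadius_le_gelfandRadius hS hST

theorem spectralRadius_smul_of_nonneg {T : X →L[ℝ] X} (hT : Monotone T) {c : ℝ} (hc : 0 ≤ c) :
    spectralRadius ℝ (c • T) = ENNReal.ofReal c * spectralRadius ℝ T := by
  rw [spectralRadius_eq_gelfandRadius (hT.const_smul hc), spectralRadius_eq_gelfandRadius hT,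
    gelfandRadius_smul, ← enorm_eq_nnnorm, Real.enorm_eq_ofReal hc]

end PositiveOperator

theorem continuousOn_Ioi_of_antitoneOn_of_monotoneOn_mul {f : ℝ → ℝ} {a : ℝ}
    (hf : AntitoneOn f (Ioi (-a))) (hg : MonotoneOn (fun x => (x + a) * f x) (Ioi (-a))) :
    ContinuousOn f (Ioi (-a)) := by
  intro x₀ hx₀
  have hx₀a : 0 < x₀ + a := by rw [mem_Ioi] at hx₀; linarith
  set r : ℝ → ℝ := fun x => (x₀ + a) * f x₀ / (x + a)
  have hr : Tendsto r (𝓝 x₀) (𝓝 (f x₀)) := by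
    have : ContinuousAt r x₀ := continuousAt_const.div (by fun_prop) hx₀a.ne'
    simpa [r, hx₀a.ne'] using this.tendsto
  have hbetween : ∀ x ∈ Ioi (-a), min (f x₀) (r x) ≤ f x ∧ f x ≤ max (f x₀) (r x) := by
    intro x hx
    have hxa : 0 < x + a := by rw [mem_Ioi] at hx; linarith
    rcases le_total x x₀ with hle | hle
    · have hfx : f x ≤ r x := (le_div_iff₀ hxa).2 (by linarith [hg hx hx₀ hle])
      exact ⟨min_le_of_left_le (hf hx hx₀ hle), le_max_of_le_right hfx⟩
    · have hfx : r x ≤ f x := (div_le_iff₀ hxa).2 (by linarith [hg hx₀ hx hle])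
      exact ⟨min_le_of_right_le hfx, le_max_of_le_left (hf hx₀ hx hle)⟩
  have hlow := (tendsto_const_nhds (x := f x₀)).min hr
  have hup := (tendsto_const_nhds (x := f x₀)).max hr
  rw [min_self] at hlow
  rw [max_self] at hup
  refine tendsto_of_tendsto_of_tendsto_of_le_of_le' (hlow.mono_left nhdsWithin_le_nhds)
    (hup.mono_left nhdsWithin_le_nhds) ?_ ?_
  · filter_upwards [self_mem_nhdsWithin] with x hx using (hbetween x hx).1
  · filter_upwards [self_mem_nhdsWithin] with x hx using (hbetween x hx).2

namespace MeasureTheory.Lp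

variable {α : Type*} [MeasurableSpace α] {μ : Measure α} {p : ℝ≥0∞}

instance : PosSMulMono ℝ (Lp ℝ p μ) where
  smul_le_smul_of_nonneg_left c hc f g hfg := by
    rw [← coeFn_le] at hfg ⊢
    filter_upwards [coeFn_smul c f, coeFn_smul c g, hfg] with x hfx hgx hx
    rw [hfx, hgx]
    exact smul_le_smul_of_nonneg_left hx hc

theorem le_of_ae_eq_mul {f g k : Lp ℝ p μ} {φ ψ : α → ℝ} (hk : 0 ≤ k) (hφψ : φ ≤ᵐ[μ] ψ)
    (hf : f =ᵐ[μ] φ * k) (hg : g =ᵐ[μ] ψ * k) : f ≤ g := by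
  rw [← coeFn_le]
  rw [← coeFn_nonneg] at hk
  filter_upwards [hf, hg, hφψ, hk] with x hfx hgx hx hkx
  rw [hfx, hgx]
  exact mul_le_mul_of_nonneg_right hx hkx

variable [Fact (1 ≤ p)]

theorem monotone_of_ae_eq_integral_mul {K : Lp ℝ p μ →L[ℝ] Lp ℝ p μ} {J : α → α → ℝ}
    (hJ : ∀ x y, 0 ≤ J x y) (hK : ∀ u, K u =ᵐ[μ] fun x => ∫ y, J x y * u y ∂μ) :
    Monotone K := by
  refine (monotone_iff_map_nonneg K).2 fun u hu => ?_
  rw [← coeFn_nonneg] at hu ⊢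
  filter_upwards [hK u] with x hx
  rw [hx]
  exact integral_nonneg_of_ae (hu.mono fun y hy => mul_nonneg (hJ x y) hy)

theorem smul_apply_le_smul_apply_of_ae_eq_div {K A A' : Lp ℝ p μ →L[ℝ] Lp ℝ p μ}
    (hK : Monotone K) {b : α → ℝ} {m l l' c c' : ℝ} (hb : ∀ᵐ x ∂μ, m ≤ b x)
    (hA : ∀ u, A u =ᵐ[μ] fun x => K u x / (l + b x))
    (hA' : ∀ u, A' u =ᵐ[μ] fun x => K u x / (l' + b x))
    (hcc' : ∀ x, m ≤ b x → c / (l + b x) ≤ c' / (l' + b x)) {u : Lp ℝ p μ} (hu : 0 ≤ u) :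
    (c • A) u ≤ (c' • A') u := by
  have hsmul : ∀ (B : Lp ℝ p μ →L[ℝ] Lp ℝ p μ) (l c : ℝ),
      (B u =ᵐ[μ] fun x => K u x / (l + b x)) →
      (c • B) u =ᵐ[μ] (fun x => c / (l + b x)) * K u := by
    intro B l c hB
    filter_upwards [coeFn_smul c (B u), hB] with x h1 h2
    simp only [smul_apply, h1, Pi.smul_apply, h2, Pi.mul_apply, smul_eq_mul]
    ring
  exact le_of_ae_eq_mul ((monotone_iff_map_nonneg K).1 hK u hu) (hb.mono hcc')
    (hsmul A l c (hA u)) (hsmul A' l' c' (hA' u))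

theorem continuousOn_spectralRadius_of_ae_eq_div {K : Lp ℝ p μ →L[ℝ] Lp ℝ p μ}
    (hK : Monotone K) {b : α → ℝ} {m : ℝ} (hb : ∀ᵐ x ∂μ, m ≤ b x)
    {A : ℝ → Lp ℝ p μ →L[ℝ] Lp ℝ p μ}
    (hA : ∀ l, -m < l → ∀ u, A l u =ᵐ[μ] fun x => K u x / (l + b x)) :
    ContinuousOn (fun l => spectralRadius ℝ (A l)) (Ioi (-m)) := by
  have hcmp : ∀ l ∈ Ioi (-m), ∀ l' ∈ Ioi (-m), ∀ c c' : ℝ,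
      (∀ x, m ≤ b x → c / (l + b x) ≤ c' / (l' + b x)) →
      ∀ u, 0 ≤ u → (c • A l) u ≤ (c' • A l') u := fun l hl l' hl' c c' hcc' u hu =>
    smul_apply_le_smul_apply_of_ae_eq_div hK hb (hA l hl) (hA l' hl') hcc' hu
  have hpos : ∀ l ∈ Ioi (-m), Monotone (A l) := fun l hl =>
    (monotone_iff_map_nonneg _).2 fun u hu => by
      simpa using hcmp l hl l hl 0 1 (fun x hx => by
        gcongr
        · linarith [mem_Ioi.1 hl]
        · exact zero_le_one) u hu
  set f : ℝ → ℝ := fun l => (spectralRadius ℝ (A l)).toReal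
  have hanti : AntitoneOn f (Ioi (-m)) := fun l hl l' hl' hll' => by
    refine ENNReal.toReal_mono (spectralRadius_ne_top _)
      (spectralRadius_le_spectralRadius (hpos l' hl') fun u hu => ?_)
    simpa using hcmp l' hl' l hl 1 1 (fun x hx => one_div_le_one_div_of_le
      (by linarith [mem_Ioi.1 hl]) (by linarith)) u hu
  have hmono : MonotoneOn (fun l => (l + m) * f l) (Ioi (-m)) := fun l hl l' hl' hll' => by
    have hl0 : 0 ≤ l + m := by linarith [mem_Ioi.1 hl]
    have hl'0 : 0 ≤ l' + m := by linarith [mem_Ioi.1 hl']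
    have h := spectralRadius_le_spectralRadius ((hpos l hl).const_smul hl0)
      (hcmp l hl l' hl' (l + m) (l' + m) (fun x hx => by
        rw [div_le_div_iff₀ (by linarith [mem_Ioi.1 hl]) (by linarith [mem_Ioi.1 hl'])]
        nlinarith))
    rw [spectralRadius_smul_of_nonneg (hpos l hl) hl0,
      spectralRadius_smul_of_nonneg (hpos l' hl') hl'0] at h
    simpa [ENNReal.toReal_mul, ENNReal.toReal_ofReal, hl0, hl'0] using
      ENNReal.toReal_mono (ENNReal.mul_ne_top ofReal_ne_top (spectralRadius_ne_top _)) h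
  refine (ENNReal.continuous_ofReal.comp_continuousOn
    (continuousOn_Ioi_of_antitoneOn_of_monotoneOn_mul hanti hmono)).congr fun l _ => ?_
  exact (ENNReal.ofReal_toReal (spectralRadius_ne_top _)).symm

end MeasureTheory.Lp

theorem stmt_8_general
    (Ω : Set ℝ) (hΩ : MeasurableSet Ω)
    (a : ℝ → ℝ)
    (c c' : ℝ)
    (hbound : ∀ x ∈ Ω, c < a x ∧ a x < c')
    (J : ℝ → ℝ → ℝ)
    (hJnonneg : ∀ x y, 0 ≤ J x y)
    (𝒥 : Lp ℝ 1 (volume.restrict Ω) →L[ℝ] Lp ℝ 1 (volume.restrict Ω))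
    (h𝒥 : ∀ u : Lp ℝ 1 (volume.restrict Ω),
      ⇑(𝒥 u) =ᵐ[volume.restrict Ω] fun x => ∫ y in Ω, J x y * u y)
    (A : ℝ → (Lp ℝ 1 (volume.restrict Ω) →L[ℝ] Lp ℝ 1 (volume.restrict Ω)))
    (hA : ∀ l : ℝ, -sInf (a '' Ω) < l → ∀ u : Lp ℝ 1 (volume.restrict Ω),
      ⇑(A l u) =ᵐ[volume.restrict Ω] fun x => (𝒥 u) x / (l + a x)) :
    ContinuousOn (fun l : ℝ => spectralRadius ℝ (A l)) (Set.Ioi (-sInf (a '' Ω))) := by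
  have hbdd : BddBelow (a '' Ω) := ⟨c, by rintro _ ⟨x, hx, rfl⟩; exact (hbound x hx).1.le⟩
  have hinf : ∀ᵐ x ∂(volume.restrict Ω), sInf (a '' Ω) ≤ a x :=
    (ae_restrict_mem hΩ).mono fun x hx => csInf_le hbdd (mem_image_of_mem a hx)
  exact Lp.continuousOn_spectralRadius_of_ae_eq_div
    (Lp.monotone_of_ae_eq_integral_mul hJnonneg h𝒥) hinf hA

/-- λ ↦ spr(A_λ) is continuous on the interval (−inf a, ∞). -/
theorem stmt_8
    (Ω : Set ℝ) (hΩ : MeasurableSet Ω)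
    (a : ℝ → ℝ) (ha : Continuous a)
    (c c' : ℝ) (hc0 : 0 < c) (hcc' : c < c')
    (hbound : ∀ x ∈ Ω, c < a x ∧ a x < c')
    (J : ℝ → ℝ → ℝ) (hJmeas : Measurable (Function.uncurry J))
    (hJnonneg : ∀ x y, 0 ≤ J x y)
    (𝒥 : Lp ℝ 1 (volume.restrict Ω) →L[ℝ] Lp ℝ 1 (volume.restrict Ω))
    (h𝒥 : ∀ u : Lp ℝ 1 (volume.restrict Ω),
      ⇑(𝒥 u) =ᵐ[volume.restrict Ω] fun x => ∫ y in Ω, J x y * u y)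
    (A : ℝ → (Lp ℝ 1 (volume.restrict Ω) →L[ℝ] Lp ℝ 1 (volume.restrict Ω)))
    (hA : ∀ l : ℝ, -sInf (a '' Ω) < l → ∀ u : Lp ℝ 1 (volume.restrict Ω),
      ⇑(A l u) =ᵐ[volume.restrict Ω] fun x => (𝒥 u) x / (l + a x)) :
    ContinuousOn (fun l : ℝ => spectralRadius ℝ (A l)) (Set.Ioi (-sInf (a '' Ω))) :=
  stmt_8_general Ω hΩ a c c' hbound J hJnonneg 𝒥 h𝒥 A hA
end

section
/- For λ > λ′ > −inf a, define c(λ, λ′) = sup_{x ∈ Ω} (λ + a(x))/(λ′ + a(x)). Then c(λ, λ′) > 1 and spr(A_{λ′}) ≤ c(λ, λ′) · spr(A_λ). -/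
/-!
Since `λ + a ≤ c(λ,λ′) (λ′ + a)` on `Ω` and `𝒥` is positive, `0 ≤ A_{λ′} u ≤ c(λ,λ′) A_λ u` for
`u ≥ 0`; the `L¹` norm is solid, so `‖A_{λ′}ⁿ‖ ≤ c(λ,λ′)ⁿ ‖A_λⁿ‖`.

Over `ℝ` the spectral radius is only bounded above by Gelfand's limit, so the growth of `‖A_λⁿ‖` is
controlled through positivity instead. For a positive operator `B` the resolvent `(μ - B)⁻¹` is
positive for every `μ > spr B`: this holds for large `μ` by the Neumann series, and the set of
such `μ` is closed and, by the expansion `(ν - B)⁻¹ = Σ (μ - ν)ᵏ ((μ - B)⁻¹)ᵏ⁺¹`, open to the left.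
Then `v = (μ - B)⁻¹ |u|` satisfies `B v ≤ μ v` and `|u| ≤ μ v`, whence `‖Bⁿ‖ ≤ μⁿ⁺¹ ‖(μ - B)⁻¹‖`.
Finally `kⁿ ∈ σ(Sⁿ)` for `k ∈ σ(S)`, so `‖Sⁿ‖ ≤ C rⁿ` forces `spr S ≤ r`.
-/

open MeasureTheory ENNReal Set Filter Topology

theorem le_of_forall_pow_le_mul_pow {x r C : ℝ} (hr : 0 ≤ r)
    (h : ∀ n : ℕ, x ^ n ≤ C * r ^ n) : x ≤ r := by
  by_contra! hrx
  have hx0 : 0 < x := hr.trans_lt hrx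
  have hlim : Tendsto (fun n : ℕ => C * (r / x) ^ n) atTop (𝓝 0) := by
    simpa using (tendsto_pow_atTop_nhds_zero_of_lt_one (div_nonneg hr hx0.le)
      ((div_lt_one hx0).2 hrx)).const_mul C
  obtain ⟨n, hn⟩ := (hlim.eventually (gt_mem_nhds one_pos)).exists
  rw [div_pow, mul_div_assoc', div_lt_one (pow_pos hx0 n)] at hn
  linarith [h n]

section SpectralRadius

variable {𝕜 A : Type*} [NormedField 𝕜] [NormedRing A] [NormedAlgebra 𝕜 A]
  [CompleteSpace A]

theorem spectralRadius_le_ofReal_of_norm_pow_le {a : A} {C r : ℝ} (hr : 0 ≤ r)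
    (h : ∀ n : ℕ, ‖a ^ n‖ ≤ C * r ^ n) : spectralRadius 𝕜 a ≤ ENNReal.ofReal r := by
  refine iSup₂_le fun k hk => ?_
  rw [← enorm_eq_nnnorm, ← ofReal_norm]
  refine ENNReal.ofReal_le_ofReal (le_of_forall_pow_le_mul_pow hr (C := C * ‖(1 : A)‖) fun n => ?_)
  calc ‖k‖ ^ n = ‖k ^ n‖ := (norm_pow k n).symm
    _ ≤ ‖a ^ n‖ * ‖(1 : A)‖ := spectrum.norm_le_norm_mul_of_mem (spectrum.pow_mem_pow a n hk)
    _ ≤ C * r ^ n * ‖(1 : A)‖ := by gcongr; exact h n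
    _ = C * ‖(1 : A)‖ * r ^ n := by ring

theorem spectralRadius_ne_top_s9 (a : A) : spectralRadius 𝕜 a ≠ ⊤ :=
  ne_top_of_le_ne_top ofReal_ne_top <| iSup₂_le fun k hk => by
    rw [← enorm_eq_nnnorm, ← ofReal_norm]
    exact ENNReal.ofReal_le_ofReal (spectrum.norm_le_norm_mul_of_mem (a := a) hk)

end SpectralRadius

theorem mem_resolventSet_of_spectralRadius_lt_ofReal {A : Type*} [NormedRing A]
    [NormedAlgebra ℝ A] {a : A} {μ ν : ℝ} (hμ : spectralRadius ℝ a < ENNReal.ofReal μ)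
    (hμν : μ ≤ ν) : ν ∈ resolventSet ℝ a :=
  spectrum.mem_resolventSet_of_spectralRadius_lt <| by
    rw [← enorm_eq_nnnorm, Real.enorm_eq_ofReal_abs]
    exact hμ.trans_le (ENNReal.ofReal_le_ofReal (hμν.trans (le_abs_self ν)))

theorem resolvent_eq_inverse_one_sub_smul_mul {𝕜 A : Type*} [Field 𝕜] [Ring A] [Algebra 𝕜 A]
    {a : A} {m : 𝕜} (hm : m ∈ resolventSet 𝕜 a) (ν : 𝕜) :
    resolvent a ν = Ring.inverse (1 - (m - ν) • resolvent a m) * resolvent a m := by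
  have hm' := spectrum.mem_resolventSet_iff.1 hm
  have hcomm : Commute (algebraMap 𝕜 A m - a) (resolvent a m) :=
    (Ring.mul_inverse_cancel _ hm').trans (Ring.inverse_mul_cancel _ hm').symm
  have hfactor : algebraMap 𝕜 A ν - a =
      (algebraMap 𝕜 A m - a) * (1 - (m - ν) • resolvent a m) := by
    rw [mul_sub, mul_one, mul_smul_comm, resolvent, Ring.mul_inverse_cancel _ hm',
      Algebra.algebraMap_eq_smul_one, Algebra.algebraMap_eq_smul_one, sub_smul]
    abel
  rw [resolvent, hfactor, Ring.mul_inverse_rev' ((Commute.one_right _).sub_right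
    (hcomm.smul_right _))]
  rfl

section OrderedNormedSpace

variable {E : Type*} [NormedAddCommGroup E] [PartialOrder E] [NormedSpace ℝ E]

def IsPositiveOperator (T : E →L[ℝ] E) : Prop := ∀ u, 0 ≤ u → 0 ≤ T u

namespace IsPositiveOperator

variable {S T : E →L[ℝ] E}

theorem monotone [IsOrderedAddMonoid E] (hT : IsPositiveOperator T) : Monotone T :=
  (monotone_iff_map_nonneg T).2 hT

theorem one : IsPositiveOperator (1 : E →L[ℝ] E) := fun _ hu => hu

theorem mul (hS : IsPositiveOperator S) (hT : IsPositiveOperator T) :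
    IsPositiveOperator (S * T) :=
  fun u hu => hS _ (hT u hu)

theorem pow (hT : IsPositiveOperator T) (n : ℕ) : IsPositiveOperator (T ^ n) := by
  induction n with
  | zero => exact one
  | succ n ih => rw [pow_succ]; exact ih.mul hT

theorem smul [PosSMulMono ℝ E] (hT : IsPositiveOperator T) {r : ℝ} (hr : 0 ≤ r) :
    IsPositiveOperator (r • T) :=
  fun u hu => smul_nonneg hr (hT u hu)

theorem pow_apply_le_pow_smul [IsOrderedAddMonoid E] [PosSMulMono ℝ E]
    (hT : IsPositiveOperator T) {μ : ℝ} (hμ : 0 ≤ μ) {v : E} (hv : T v ≤ μ • v) (n : ℕ) :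
    (T ^ n) v ≤ μ ^ n • v := by
  induction n with
  | zero => simp
  | succ n ih =>
    calc (T ^ (n + 1)) v = (T ^ n) (T v) := by rw [pow_succ, mul_apply_eq_comp]
      _ ≤ (T ^ n) (μ • v) := (hT.pow n).monotone hv
      _ = μ • (T ^ n) v := map_smul _ _ _
      _ ≤ μ • (μ ^ n • v) := smul_le_smul_of_nonneg_left ih hμ
      _ = μ ^ (n + 1) • v := by rw [smul_smul, pow_succ']

theorem pow_apply_le_pow_apply [IsOrderedAddMonoid E] (hS : IsPositiveOperator S)
    (hT : IsPositiveOperator T) (hST : ∀ u, 0 ≤ u → S u ≤ T u) (n : ℕ) {u : E} (hu : 0 ≤ u) :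
    (S ^ n) u ≤ (T ^ n) u := by
  induction n generalizing u with
  | zero => rfl
  | succ n ih =>
    rw [pow_succ, pow_succ, mul_apply_eq_comp, mul_apply_eq_comp]
    exact (ih (hS u hu)).trans ((hT.pow n).monotone (hST u hu))

theorem tsum [IsOrderedAddMonoid E] [OrderClosedTopology E] {F : ℕ → E →L[ℝ] E} (hF : Summable F)
    (h : ∀ n, IsPositiveOperator (F n)) : IsPositiveOperator (∑' n, F n) := fun u hu => by
  have hmap := (ContinuousLinearMap.apply ℝ E u).map_tsum hF
  simp only [ContinuousLinearMap.apply_apply] at hmap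
  rw [hmap]
  exact tsum_nonneg fun n => h n u hu

theorem inverse_one_sub [IsOrderedAddMonoid E] [OrderClosedTopology E] [CompleteSpace E]
    (hT : IsPositiveOperator T) (hT1 : ‖T‖ < 1) : IsPositiveOperator (Ring.inverse (1 - T)) := by
  rw [← geom_series_eq_inverse T hT1]
  exact tsum (summable_geometric_of_norm_lt_one hT1) hT.pow

end IsPositiveOperator

theorem isClosed_setOf_isPositiveOperator [OrderClosedTopology E] :
    IsClosed {T : E →L[ℝ] E | IsPositiveOperator T} := by
  simp only [IsPositiveOperator, ofPred_forall]
  exact isClosed_iInter fun u => isClosed_iInter fun _ =>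
    isClosed_le continuous_const (ContinuousLinearMap.apply ℝ E u).continuous

end OrderedNormedSpace

section Resolvent

variable {E : Type*} [NormedAddCommGroup E] [PartialOrder E] [IsOrderedAddMonoid E]
  [OrderClosedTopology E] [NormedSpace ℝ E] [PosSMulMono ℝ E] [CompleteSpace E]
  {B : E →L[ℝ] E}

theorem isPositiveOperator_resolvent_of_le {m ν : ℝ} (hm : m ∈ resolventSet ℝ B)
    (hR : IsPositiveOperator (resolvent B m)) (hνm : ν ≤ m)
    (hν : (m - ν) * ‖resolvent B m‖ < 1) : IsPositiveOperator (resolvent B ν) := by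
  rw [resolvent_eq_inverse_one_sub_smul_mul hm]
  refine (IsPositiveOperator.inverse_one_sub (hR.smul (sub_nonneg.2 hνm)) ?_).mul hR
  rwa [norm_smul, Real.norm_of_nonneg (sub_nonneg.2 hνm)]

theorem IsPositiveOperator.resolvent_of_norm_lt (hB : IsPositiveOperator B) {ν : ℝ}
    (hν : ‖B‖ < ν) : IsPositiveOperator (resolvent B ν) := by
  have hν0 : 0 < ν := (norm_nonneg B).trans_lt hν
  have hscale := spectrum.units_smul_resolvent_self (r := Units.mk0 ν hν0.ne') (a := B)
  simp only [Units.smul_def, Units.val_mk0, Units.val_inv_eq_inv_val, resolvent, map_one]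
    at hscale
  rw [← inv_smul_smul₀ hν0.ne' (resolvent B ν), resolvent, hscale]
  refine (IsPositiveOperator.inverse_one_sub (hB.smul (inv_nonneg.2 hν0.le)) ?_).smul
    (inv_nonneg.2 hν0.le)
  rw [norm_smul, Real.norm_of_nonneg (inv_nonneg.2 hν0.le), inv_mul_lt_one₀ hν0]
  exact hν

theorem IsPositiveOperator.resolvent_of_spectralRadius_lt (hB : IsPositiveOperator B) {μ : ℝ}
    (hμ : spectralRadius ℝ B < ENNReal.ofReal μ) : IsPositiveOperator (resolvent B μ) := by
  have hρ : ∀ ν, μ ≤ ν → ν ∈ resolventSet ℝ B := fun _ hν =>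
    mem_resolventSet_of_spectralRadius_lt_ofReal hμ hν
  set s := {ν : ℝ | IsPositiveOperator (resolvent B ν)}
  set b := max μ (‖B‖ + 1)
  have hclosed : IsClosed (s ∩ Icc μ b) := by
    rw [inter_comm]
    refine ContinuousOn.preimage_isClosed_of_isClosed (fun ν hν => ?_) isClosed_Icc
      isClosed_setOf_isPositiveOperator
    exact (spectrum.hasDerivAt_resolvent_const_left (hρ ν hν.1)).continuousAt.continuousWithinAt
  have hb : b ∈ s := hB.resolvent_of_norm_lt (by linarith [le_max_right μ (‖B‖ + 1)])
  refine hclosed.Icc_subset_of_forall_exists_lt hb ?_ ⟨le_rfl, le_max_left _ _⟩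
  rintro x ⟨hx, hμx, -⟩ y hyx
  have hδ : 0 < 1 / (‖resolvent B x‖ + 1) := by positivity
  refine ⟨max y (x - 1 / (‖resolvent B x‖ + 1)), ?_, le_max_left _ _,
    max_lt hyx (sub_lt_self x hδ)⟩
  refine isPositiveOperator_resolvent_of_le (hρ x hμx.le) hx
    (max_le hyx.le (sub_le_self x hδ.le)) ?_
  calc (x - max y (x - 1 / (‖resolvent B x‖ + 1))) * ‖resolvent B x‖
      ≤ 1 / (‖resolvent B x‖ + 1) * ‖resolvent B x‖ := by
        gcongr
        linarith [le_max_right y (x - 1 / (‖resolvent B x‖ + 1))]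
    _ < 1 := by
        rw [div_mul_eq_mul_div, one_mul, div_lt_one (by positivity)]
        linarith

end Resolvent

theorem norm_le_norm_of_nonneg_of_le {E : Type*} [NormedAddCommGroup E] [Lattice E]
    [HasSolidNorm E] [IsOrderedAddMonoid E] {u v : E} (hu : 0 ≤ u) (huv : u ≤ v) : ‖u‖ ≤ ‖v‖ :=
  norm_le_norm_of_abs_le_abs <| by rwa [abs_of_nonneg hu, abs_of_nonneg (hu.trans huv)]

section BanachLattice

variable {E : Type*} [NormedAddCommGroup E] [Lattice E] [HasSolidNorm E] [IsOrderedAddMonoid E]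
  [NormedSpace ℝ E] {S T : E →L[ℝ] E}

namespace IsPositiveOperator

theorem norm_apply_le (hT : IsPositiveOperator T) (u : E) : ‖T u‖ ≤ ‖T |u|‖ := by
  refine norm_le_norm_of_abs_le_abs ?_
  rw [abs_of_nonneg (hT _ (abs_nonneg u)), abs_le', ← map_neg]
  exact ⟨hT.monotone (le_abs_self u), hT.monotone (neg_le_abs u)⟩

theorem norm_le_of_apply_le (hS : IsPositiveOperator S) (hST : ∀ u, 0 ≤ u → S u ≤ T u) :
    ‖S‖ ≤ ‖T‖ :=
  ContinuousLinearMap.opNorm_le_bound _ (norm_nonneg T) fun u => calc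
    ‖S u‖ ≤ ‖S |u|‖ := hS.norm_apply_le u
    _ ≤ ‖T |u|‖ := norm_le_norm_of_nonneg_of_le (hS _ (abs_nonneg u)) (hST _ (abs_nonneg u))
    _ ≤ ‖T‖ * ‖|u|‖ := T.le_opNorm _
    _ = ‖T‖ * ‖u‖ := by rw [norm_abs_eq_norm]

variable [PosSMulMono ℝ E]

theorem norm_pow_le_of_resolvent (hT : IsPositiveOperator T) {μ : ℝ} (hμ : 0 ≤ μ)
    (hρ : μ ∈ resolventSet ℝ T) (hR : IsPositiveOperator (resolvent T μ)) (n : ℕ) :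
    ‖T ^ n‖ ≤ μ * ‖resolvent T μ‖ * μ ^ n := by
  refine ContinuousLinearMap.opNorm_le_bound _ (by positivity) fun u => ?_
  set v := resolvent T μ |u|
  have hv : 0 ≤ v := hR _ (abs_nonneg u)
  have hid : μ • v - T v = |u| := by
    have h := congrArg (fun X : E →L[ℝ] E => X |u|)
      (Ring.mul_inverse_cancel _ (spectrum.mem_resolventSet_iff.1 hρ))
    simpa [Algebra.algebraMap_eq_smul_one, resolvent, v] using h
  have hTv : T v ≤ μ • v := sub_nonneg.1 (hid ▸ abs_nonneg u)
  have huv : |u| ≤ μ • v := hid ▸ sub_le_self _ (hT v hv)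
  have hpow : (T ^ n) |u| ≤ μ ^ (n + 1) • v := calc
    (T ^ n) |u| ≤ (T ^ n) (μ • v) := (hT.pow n).monotone huv
    _ = μ • (T ^ n) v := map_smul _ _ _
    _ ≤ μ • (μ ^ n • v) := smul_le_smul_of_nonneg_left (hT.pow_apply_le_pow_smul hμ hTv n) hμ
    _ = μ ^ (n + 1) • v := by rw [smul_smul, pow_succ']
  calc ‖(T ^ n) u‖ ≤ ‖(T ^ n) |u|‖ := (hT.pow n).norm_apply_le u
    _ ≤ ‖μ ^ (n + 1) • v‖ := norm_le_norm_of_nonneg_of_le ((hT.pow n) _ (abs_nonneg u)) hpow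
    _ = μ ^ (n + 1) * ‖v‖ := by rw [norm_smul, Real.norm_of_nonneg (by positivity)]
    _ ≤ μ ^ (n + 1) * (‖resolvent T μ‖ * ‖u‖) := by
        gcongr
        simpa only [norm_abs_eq_norm] using (resolvent T μ).le_opNorm |u|
    _ = μ * ‖resolvent T μ‖ * μ ^ n * ‖u‖ := by ring

variable [CompleteSpace E]

theorem norm_pow_le (hT : IsPositiveOperator T) {μ : ℝ}
    (hμ : spectralRadius ℝ T < ENNReal.ofReal μ) (n : ℕ) :
    ‖T ^ n‖ ≤ μ * ‖resolvent T μ‖ * μ ^ n :=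
  hT.norm_pow_le_of_resolvent (ENNReal.ofReal_pos.1 (pos_of_gt hμ)).le
    (mem_resolventSet_of_spectralRadius_lt_ofReal hμ le_rfl)
    (hT.resolvent_of_spectralRadius_lt hμ) n

theorem spectralRadius_le_mul (hS : IsPositiveOperator S) (hT : IsPositiveOperator T) {c : ℝ}
    (hc : 0 ≤ c) (hST : ∀ u, 0 ≤ u → S u ≤ c • T u) :
    spectralRadius ℝ S ≤ ENNReal.ofReal c * spectralRadius ℝ T := by
  have hfin := spectralRadius_ne_top_s9 (𝕜 := ℝ) T
  have hbound : ∀ μ, (spectralRadius ℝ T).toReal < μ →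
      spectralRadius ℝ S ≤ ENNReal.ofReal (c * μ) := by
    intro μ hμ
    have hμ' := (ENNReal.lt_ofReal_iff_toReal_lt hfin).2 hμ
    refine spectralRadius_le_ofReal_of_norm_pow_le (C := μ * ‖resolvent T μ‖)
      (mul_nonneg hc (toReal_nonneg.trans hμ.le)) fun n => ?_
    calc ‖S ^ n‖ ≤ ‖(c • T) ^ n‖ :=
          (hS.pow n).norm_le_of_apply_le fun u hu =>
            hS.pow_apply_le_pow_apply (hT.smul hc) hST n hu
      _ = c ^ n * ‖T ^ n‖ := by rw [smul_pow, norm_smul, Real.norm_of_nonneg (pow_nonneg hc n)]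
      _ ≤ c ^ n * (μ * ‖resolvent T μ‖ * μ ^ n) := by gcongr; exact hT.norm_pow_le hμ' n
      _ = μ * ‖resolvent T μ‖ * (c * μ) ^ n := by ring
  have hlim : Tendsto (fun μ => ENNReal.ofReal (c * μ)) (𝓝[>] (spectralRadius ℝ T).toReal)
      (𝓝 (ENNReal.ofReal (c * (spectralRadius ℝ T).toReal))) :=
    ((ENNReal.continuous_ofReal.comp (continuous_const_mul c)).tendsto _).mono_left
      nhdsWithin_le_nhds
  have h := ge_of_tendsto hlim (eventually_nhdsWithin_of_forall hbound)
  rwa [ENNReal.ofReal_mul hc, ENNReal.ofReal_toReal hfin] at h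

end IsPositiveOperator

end BanachLattice

section Ratio

variable {X : Type*} {s : Set X} {f : X → ℝ} {l l' : ℝ}

theorem add_pos_of_neg_sInf_lt (hf : BddBelow (f '' s)) (hl : -sInf (f '' s) < l) {x : X}
    (hx : x ∈ s) : 0 < l + f x := by
  linarith [csInf_le hf (mem_image_of_mem f hx)]

theorem bddAbove_image_add_div_add (hf : BddBelow (f '' s)) (hl' : -sInf (f '' s) < l')
    (hll' : l' ≤ l) : BddAbove ((fun x => (l + f x) / (l' + f x)) '' s) := by
  refine ⟨1 + (l - l') / (l' + sInf (f '' s)), ?_⟩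
  rintro _ ⟨x, hx, rfl⟩
  have hx' := add_pos_of_neg_sInf_lt hf hl' hx
  have hinf := csInf_le hf (mem_image_of_mem f hx)
  calc (l + f x) / (l' + f x) = 1 + (l - l') / (l' + f x) := by field_simp; ring
    _ ≤ 1 + (l - l') / (l' + sInf (f '' s)) := by gcongr; linarith

theorem add_le_sSup_image_add_div_add_mul (hf : BddBelow (f '' s))
    (hl' : -sInf (f '' s) < l') (hll' : l' ≤ l) {x : X} (hx : x ∈ s) :
    l + f x ≤ sSup ((fun x => (l + f x) / (l' + f x)) '' s) * (l' + f x) :=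
  (div_le_iff₀ (add_pos_of_neg_sInf_lt hf hl' hx)).1 <|
    le_csSup (bddAbove_image_add_div_add hf hl' hll') (mem_image_of_mem _ hx)

theorem one_lt_sSup_image_add_div_add (hf : BddBelow (f '' s)) (hs : s.Nonempty)
    (hl' : -sInf (f '' s) < l') (hll' : l' < l) :
    1 < sSup ((fun x => (l + f x) / (l' + f x)) '' s) := by
  obtain ⟨x, hx⟩ := hs
  have hx' := add_pos_of_neg_sInf_lt hf hl' hx
  refine lt_of_mul_lt_mul_right ?_ hx'.le
  linarith [add_le_sSup_image_add_div_add_mul hf hl' hll'.le hx]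

end Ratio

section Lp

variable {α : Type*} [MeasurableSpace α] {μ : Measure α} {p : ℝ≥0∞}

instance : PosSMulMono ℝ (Lp ℝ p μ) :=
  PosSMulMono.of_smul_nonneg fun c hc u hu => by
    rw [← Lp.coeFn_nonneg] at hu ⊢
    filter_upwards [hu, Lp.coeFn_smul c u] with x hux hcux
    rw [hcux, Pi.smul_apply, smul_eq_mul]
    exact mul_nonneg hc hux

theorem isPositiveOperator_of_coeFn_eq_integral [Fact (1 ≤ p)] {J : α → α → ℝ}
    (hJ : ∀ x y, 0 ≤ J x y) {K : Lp ℝ p μ →L[ℝ] Lp ℝ p μ}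
    (hK : ∀ u, ⇑(K u) =ᵐ[μ] fun x => ∫ y, J x y * u y ∂μ) :
    IsPositiveOperator K := fun u hu => by
  rw [← Lp.coeFn_nonneg] at hu ⊢
  filter_upwards [hK u] with x hx
  rw [hx]
  exact integral_nonneg_of_ae (hu.mono fun y hy => mul_nonneg (hJ x y) hy)

variable [Fact (1 ≤ p)] {K S T : Lp ℝ p μ →L[ℝ] Lp ℝ p μ} {d d' : α → ℝ}

theorem isPositiveOperator_of_coeFn_eq_div (hK : IsPositiveOperator K) (hd : ∀ᵐ x ∂μ, 0 ≤ d x)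
    (hT : ∀ u, ⇑(T u) =ᵐ[μ] fun x => K u x / d x) : IsPositiveOperator T := fun u hu => by
  rw [← Lp.coeFn_nonneg]
  filter_upwards [hT u, (Lp.coeFn_nonneg _).2 (hK u hu), hd] with x hx hKx hdx
  rw [hx]
  exact div_nonneg hKx hdx

theorem apply_le_smul_apply_of_coeFn_eq_div (hK : IsPositiveOperator K) {c : ℝ}
    (hd : ∀ᵐ x ∂μ, 0 < d x) (hd' : ∀ᵐ x ∂μ, 0 < d' x) (hdd' : ∀ᵐ x ∂μ, d x ≤ c * d' x)
    (hS : ∀ u, ⇑(S u) =ᵐ[μ] fun x => K u x / d' x) (hT : ∀ u, ⇑(T u) =ᵐ[μ] fun x => K u x / d x)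
    {u : Lp ℝ p μ} (hu : 0 ≤ u) : S u ≤ c • T u := by
  rw [← Lp.coeFn_le]
  filter_upwards [hS u, hT u, Lp.coeFn_smul c (T u), (Lp.coeFn_nonneg _).2 (hK u hu), hd, hd',
    hdd'] with x hSx hTx hcTx hKx hdx hd'x hdd'x
  rw [hSx, hcTx, Pi.smul_apply, hTx, smul_eq_mul, ← mul_div_assoc,
    div_le_div_iff₀ hd'x hdx, mul_assoc, mul_left_comm]
  exact mul_le_mul_of_nonneg_left hdd'x hKx

end Lp

theorem stmt_9_general
    (Ω : Set ℝ) (hΩ : MeasurableSet Ω)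
    (a : ℝ → ℝ)
    (c c' : ℝ)
    (hbound : ∀ x ∈ Ω, c < a x ∧ a x < c')
    (J : ℝ → ℝ → ℝ)
    (hJnonneg : ∀ x y, 0 ≤ J x y)
    (𝒥 : Lp ℝ 1 (volume.restrict Ω) →L[ℝ] Lp ℝ 1 (volume.restrict Ω))
    (h𝒥 : ∀ u : Lp ℝ 1 (volume.restrict Ω),
      ⇑(𝒥 u) =ᵐ[volume.restrict Ω] fun x => ∫ y in Ω, J x y * u y)
    (A : ℝ → (Lp ℝ 1 (volume.restrict Ω) →L[ℝ] Lp ℝ 1 (volume.restrict Ω)))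
    (hA : ∀ l : ℝ, -sInf (a '' Ω) < l → ∀ u : Lp ℝ 1 (volume.restrict Ω),
      ⇑(A l u) =ᵐ[volume.restrict Ω] fun x => (𝒥 u) x / (l + a x))
    (hne : Ω.Nonempty)
    (l l' : ℝ) (hl' : -sInf (a '' Ω) < l') (hll' : l' < l) :
    1 < sSup ((fun x => (l + a x) / (l' + a x)) '' Ω) ∧
      spectralRadius ℝ (A l') ≤
        ENNReal.ofReal (sSup ((fun x => (l + a x) / (l' + a x)) '' Ω)) *
          spectralRadius ℝ (A l) := by
  have hbdd : BddBelow (a '' Ω) := ⟨c, by rintro _ ⟨x, hx, rfl⟩; exact (hbound x hx).1.le⟩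
  have hl := hl'.trans hll'
  have hone := one_lt_sSup_image_add_div_add hbdd hne hl' hll'
  refine ⟨hone, ?_⟩
  have hpos : ∀ t, -sInf (a '' Ω) < t → ∀ᵐ x ∂volume.restrict Ω, 0 < t + a x := fun t ht =>
    ae_restrict_of_forall_mem hΩ fun x hx => add_pos_of_neg_sInf_lt hbdd ht hx
  have h𝒥pos := isPositiveOperator_of_coeFn_eq_integral hJnonneg h𝒥
  have hApos : ∀ t, -sInf (a '' Ω) < t → IsPositiveOperator (A t) := fun t ht =>
    isPositiveOperator_of_coeFn_eq_div h𝒥pos ((hpos t ht).mono fun _ hx => hx.le) (hA t ht)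
  refine (hApos l' hl').spectralRadius_le_mul (hApos l hl) (zero_le_one.trans hone.le)
    fun u hu => ?_
  exact apply_le_smul_apply_of_coeFn_eq_div h𝒥pos (hpos l hl) (hpos l' hl')
    (ae_restrict_of_forall_mem hΩ fun x hx => add_le_sSup_image_add_div_add_mul hbdd hl' hll'.le hx)
    (hA l' hl') (hA l hl) hu

/-- For λ > λ′ > −inf a, with c(λ,λ′) = sup_{x ∈ Ω} (λ + a x)/(λ′ + a x),
one has c(λ,λ′) > 1 and spr(A_{λ′}) ≤ c(λ,λ′) · spr(A_λ). -/
theorem stmt_9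
    (Ω : Set ℝ) (hΩ : MeasurableSet Ω)
    (a : ℝ → ℝ) (ha : Continuous a)
    (c c' : ℝ) (hc0 : 0 < c) (hcc' : c < c')
    (hbound : ∀ x ∈ Ω, c < a x ∧ a x < c')
    (J : ℝ → ℝ → ℝ) (hJmeas : Measurable (Function.uncurry J))
    (hJnonneg : ∀ x y, 0 ≤ J x y)
    (𝒥 : Lp ℝ 1 (volume.restrict Ω) →L[ℝ] Lp ℝ 1 (volume.restrict Ω))
    (h𝒥 : ∀ u : Lp ℝ 1 (volume.restrict Ω),
      ⇑(𝒥 u) =ᵐ[volume.restrict Ω] fun x => ∫ y in Ω, J x y * u y)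
    (A : ℝ → (Lp ℝ 1 (volume.restrict Ω) →L[ℝ] Lp ℝ 1 (volume.restrict Ω)))
    (hA : ∀ l : ℝ, -sInf (a '' Ω) < l → ∀ u : Lp ℝ 1 (volume.restrict Ω),
      ⇑(A l u) =ᵐ[volume.restrict Ω] fun x => (𝒥 u) x / (l + a x))
    (hne : Ω.Nonempty)
    (l l' : ℝ) (hl' : -sInf (a '' Ω) < l') (hll' : l' < l) :
    1 < sSup ((fun x => (l + a x) / (l' + a x)) '' Ω) ∧
      spectralRadius ℝ (A l') ≤
        ENNReal.ofReal (sSup ((fun x => (l + a x) / (l' + a x)) '' Ω)) *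
          spectralRadius ℝ (A l) :=
  stmt_9_general Ω hΩ a c c' hbound J hJnonneg 𝒥 h𝒥 A hA hne l l' hl' hll'
end

section
/- Suppose spr(A_0) < 1, where A_0 u = (𝒥u)/a (the operator A_λ at λ = 0; note 0 > −inf a since a > c > 0). Then every element z of the spectrum of L, acting on complex L¹(Ω), satisfies Re z < 0. -/
/-!
Write `z - L = (z + a) - 𝒥` on complex `L¹`. For `Re z ≥ 0` we have `|z + a| ≥ a ≥ c`, so any `u`
satisfies the pointwise bound `|u| ≤ A₀|u| + c⁻¹ |((z + a) - s𝒥) u|` for every `s ∈ [0, 1]`.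
Since `A₀` is positive, this turns into the uniform estimate
`‖u‖ ≤ ‖(1 - A₀)⁻¹‖ c⁻¹ ‖((z + a) - s𝒥) u‖` as soon as `(1 - A₀)⁻¹` is a positive operator, and the
method of continuity in `s` then carries the invertibility of `z + a` over to `(z + a) - 𝒥`.

The hypothesis `spr(A₀) < 1` is about the real spectrum, so it does not provide a Neumann series for
`(1 - A₀)⁻¹`. It does say that `t - A₀` is invertible for all real `t ≥ 1`; positivity of
`(t - A₀)⁻¹` holds for large `t` and is transported down to `t = 1` along this real resolvent set.
-/

open MeasureTheory ENNReal Set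

theorem Real.le_induction_of_step {P : ℝ → Prop} {a b δ : ℝ} (hδ : 0 < δ) (hab : a ≤ b)
    (ha : P a) (step : ∀ s t, a ≤ s → s ≤ t → t ≤ b → t - s ≤ δ → P s → P t) : P b := by
  have key : ∀ n : ℕ, P (min b (a + n * δ)) := by
    intro n
    induction n with
    | zero => simpa [hab] using ha
    | succ n ih =>
      refine step _ _ (le_min hab (le_add_of_nonneg_right (by positivity))) ?_
        (min_le_left _ _) ?_ ih
      · gcongr; linarith
      · have : min b (a + (n + 1 : ℕ) * δ) ≤ min (b + δ) (a + n * δ + δ) :=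
          min_le_min (by linarith) (by push_cast; linarith)
        rw [min_add_add_right] at this
        linarith
  obtain ⟨n, hn⟩ := exists_nat_ge ((b - a) / δ)
  have hb : b ≤ a + n * δ := by rw [div_le_iff₀ hδ] at hn; linarith
  simpa [min_eq_left hb] using key n

theorem isUnit_smul_one_sub_of_spectralRadius_lt_one {A : Type*} [NormedRing A]
    [NormedAlgebra ℝ A] {a : A} (h : spectralRadius ℝ a < 1) {t : ℝ} (ht : 1 ≤ t) :
    IsUnit (t • 1 - a) := by
  have := spectrum.mem_resolventSet_of_spectralRadius_lt (k := t) (h.trans_le (by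
    rw [← ENNReal.coe_one, ENNReal.coe_le_coe, ← NNReal.coe_le_coe, coe_nnnorm,
      Real.norm_of_nonneg (by linarith)]
    exact_mod_cast ht))
  rwa [spectrum.mem_resolventSet_iff, Algebra.algebraMap_eq_smul_one] at this

section PositiveOperator

variable {E : Type*} [NormedAddCommGroup E] [Lattice E] [NormedSpace ℝ E]

def PreservesNonneg (T : E →L[ℝ] E) : Prop := ∀ u, 0 ≤ u → 0 ≤ T u

namespace PreservesNonneg

theorem one : PreservesNonneg (1 : E →L[ℝ] E) := fun _ hu => hu

theorem mul {S T : E →L[ℝ] E} (hS : PreservesNonneg S) (hT : PreservesNonneg T) :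
    PreservesNonneg (S * T) :=
  fun u hu => hS _ (hT u hu)

theorem pow {T : E →L[ℝ] E} (hT : PreservesNonneg T) (n : ℕ) : PreservesNonneg (T ^ n) := by
  induction n with
  | zero => exact one
  | succ n ih => rw [pow_succ]; exact ih.mul hT

theorem smul [PosSMulMono ℝ E] {T : E →L[ℝ] E} (hT : PreservesNonneg T) {t : ℝ} (ht : 0 ≤ t) :
    PreservesNonneg (t • T) :=
  fun u hu => smul_nonneg ht (hT u hu)

theorem tsum [IsOrderedAddMonoid E] [OrderClosedTopology E] {T : ℕ → E →L[ℝ] E}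
    (hT : ∀ n, PreservesNonneg (T n)) (hsum : Summable T) : PreservesNonneg (∑' n, T n) :=
  fun u hu => by
    rw [← ContinuousLinearMap.apply_apply u, (ContinuousLinearMap.apply ℝ E u).map_tsum hsum]
    exact tsum_nonneg fun n => hT n u hu

theorem inverse_sub [IsOrderedAddMonoid E] [OrderClosedTopology E] [CompleteSpace E]
    {V B : E →L[ℝ] E} (hV : IsUnit V) (hVinv : PreservesNonneg (Ring.inverse V))
    (hB : PreservesNonneg B) (h : ‖Ring.inverse V * B‖ < 1) :
    PreservesNonneg (Ring.inverse (V - B)) := by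
  obtain ⟨v, rfl⟩ := hV
  rw [Ring.inverse_unit] at hVinv h
  -- `V - B = V (1 - V⁻¹ B)` is inverted by a Neumann series of positive operators
  have hfac : (v : E →L[ℝ] E) - B = ↑(v * Units.oneSub _ h) := by
    rw [Units.val_mul, Units.val_oneSub, mul_sub, mul_one, ← mul_assoc, Units.mul_inv, one_mul]
  rw [hfac, Ring.inverse_unit, mul_inv_rev, Units.val_mul]
  exact (tsum (fun n => (hVinv.mul hB).pow n) (summable_geometric_of_norm_lt_one h)).mul hVinv

variable [IsOrderedAddMonoid E] [OrderClosedTopology E] [CompleteSpace E] [PosSMulMono ℝ E]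

theorem inverse_smul_one_sub {A : E →L[ℝ] E} (hA : PreservesNonneg A) {t : ℝ} (ht : ‖A‖ < t) :
    PreservesNonneg (Ring.inverse (t • (1 : E →L[ℝ] E) - A)) := by
  have ht0 : 0 < t := (norm_nonneg A).trans_lt ht
  let u : (E →L[ℝ] E)ˣ :=
    ⟨t • 1, t⁻¹ • 1, by simp [smul_smul, ht0.ne'], by simp [smul_smul, ht0.ne']⟩
  have hinv : Ring.inverse (u : E →L[ℝ] E) = t⁻¹ • 1 := Ring.inverse_unit u
  refine inverse_sub u.isUnit ?_ hA ?_ <;> rw [hinv]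
  · exact one.smul (inv_nonneg.2 ht0.le)
  · rwa [smul_mul_assoc, one_mul, norm_smul, norm_inv, Real.norm_of_nonneg ht0.le,
      inv_mul_lt_iff₀ ht0, mul_one]

theorem inverse_sub_smul_one {V : E →L[ℝ] E} (hV : IsUnit V)
    (hVinv : PreservesNonneg (Ring.inverse V)) {r : ℝ} (hr : 0 ≤ r)
    (h : r * ‖Ring.inverse V‖ < 1) : PreservesNonneg (Ring.inverse (V - r • 1)) :=
  inverse_sub hV hVinv (one.smul hr) <| by
    rwa [mul_smul_comm, mul_one, norm_smul, Real.norm_of_nonneg hr]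

end PreservesNonneg

theorem norm_le_of_le_apply_add [IsOrderedAddMonoid E] [HasSolidNorm E] {A : E →L[ℝ] E}
    (hA : IsUnit (1 - A)) (hR : PreservesNonneg (Ring.inverse (1 - A))) {v w : E} (hv : 0 ≤ v)
    (h : v ≤ A v + w) : ‖v‖ ≤ ‖Ring.inverse (1 - A)‖ * ‖w‖ := by
  set R := Ring.inverse (1 - A)
  have hRv : R ((1 - A) v) = v := by
    rw [← mul_apply_eq_comp, Ring.inverse_mul_cancel _ hA, one_apply_eq_self]
  have hle : v ≤ R w := by
    have := hR _ (sub_nonneg.2 (show (1 - A) v ≤ w by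
      rwa [sub_apply, one_apply_eq_self, sub_le_iff_le_add']))
    rwa [map_sub, hRv, sub_nonneg] at this
  calc ‖v‖ ≤ ‖R w‖ := norm_le_norm_of_abs_le_abs (by
          rw [abs_of_nonneg hv]; exact hle.trans (le_abs_self _))
    _ ≤ ‖R‖ * ‖w‖ := R.le_opNorm w

theorem preservesNonneg_inverse_one_sub [IsOrderedAddMonoid E] [OrderClosedTopology E]
    [CompleteSpace E] [PosSMulMono ℝ E] {A : E →L[ℝ] E} (hA : PreservesNonneg A)
    (hres : ∀ t : ℝ, 1 ≤ t → IsUnit (t • (1 : E →L[ℝ] E) - A)) :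
    PreservesNonneg (Ring.inverse (1 - A)) := by
  set t₀ := ‖A‖ + 1
  have ht₀ : 1 ≤ t₀ := by simp [t₀]
  have hcont : ContinuousOn (fun t : ℝ => Ring.inverse (t • (1 : E →L[ℝ] E) - A)) (Icc 1 t₀) :=
    fun t ht => by
      obtain ⟨u, hu⟩ := hres t ht.1
      have hinv := NormedRing.inverse_continuousAt u
      rw [hu] at hinv
      exact (hinv.comp (f := fun t : ℝ => t • (1 : E →L[ℝ] E) - A) (by fun_prop)).continuousWithinAt
  obtain ⟨M, hM⟩ := isCompact_Icc.exists_bound_of_continuousOn hcont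
  have hM0 : 0 ≤ M := (norm_nonneg _).trans (hM 1 ⟨le_rfl, ht₀⟩)
  -- `M` bounds the resolvent on `[1, t₀]`, so positivity travels down from `t₀` to `1` in steps
  -- of length `(M + 1)⁻¹`
  have := Real.le_induction_of_step
    (P := fun t => PreservesNonneg (Ring.inverse ((-t) • (1 : E →L[ℝ] E) - A)))
    (δ := (M + 1)⁻¹) (by positivity) (neg_le_neg ht₀)
    (by simpa using hA.inverse_smul_one_sub (lt_add_one _)) ?_
  · simpa using this
  intro s t hs hst ht hδ hpos
  have hbound : (t - s) * ‖Ring.inverse ((-s) • (1 : E →L[ℝ] E) - A)‖ < 1 := calc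
    _ ≤ (M + 1)⁻¹ * M :=
      mul_le_mul hδ (hM _ ⟨by linarith, by linarith⟩) (norm_nonneg _) (by positivity)
    _ < 1 := by rw [inv_mul_lt_iff₀ (by positivity)]; linarith
  convert PreservesNonneg.inverse_sub_smul_one (hres (-s) (by linarith)) hpos (by linarith)
    hbound using 2
  rw [sub_right_comm, ← sub_smul]
  ring_nf

end PositiveOperator

theorem isUnit_sub_of_forall_norm_inv_le {𝕜 R : Type*} [RCLike 𝕜] [NormedRing R]
    [NormedAlgebra 𝕜 R] [HasSummableGeomSeries R] {T B : R} (hT : IsUnit T) {K : ℝ}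
    (hK : ∀ s ∈ Icc (0 : ℝ) 1, ∀ w : Rˣ, (w : R) = T - (s : 𝕜) • B → ‖(↑w⁻¹ : R)‖ ≤ K) :
    IsUnit (T - B) := by
  nontriviality R
  obtain ⟨w₀, hw₀⟩ := hT
  have hK0 : 0 ≤ K := (norm_nonneg _).trans (hK 0 ⟨le_rfl, zero_le_one⟩ w₀ (by simp [hw₀]))
  simpa using Real.le_induction_of_step (P := fun s : ℝ => IsUnit (T - (s : 𝕜) • B))
    (δ := ((K + 1) * (‖B‖ + 1))⁻¹) (by positivity) zero_le_one (by simp [← hw₀]) (by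
      rintro s t hs hst ht hδ ⟨w, hw⟩
      refine ⟨w.ofNearby _ ?_, rfl⟩
      have hwK := hK s ⟨hs, hst.trans ht⟩ w hw
      have hdiff : T - (t : 𝕜) • B - (T - (s : 𝕜) • B) = ((s - t : ℝ) : 𝕜) • B := by
        rw [RCLike.ofReal_sub, sub_smul]; abel
      rw [hw, hdiff, norm_smul, RCLike.norm_ofReal, abs_sub_comm, abs_of_nonneg (by linarith)]
      calc (t - s) * ‖B‖ ≤ ((K + 1) * (‖B‖ + 1))⁻¹ * (‖B‖ + 1) := by gcongr; linarith
        _ = (K + 1)⁻¹ := by field_simp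
        _ < ‖(↑w⁻¹ : R)‖⁻¹ := by gcongr; exacts [Units.norm_pos _, by linarith])

theorem ContinuousLinearMap.norm_inv_le_of_forall_norm_le {𝕜 F : Type*}
    [NontriviallyNormedField 𝕜] [NormedAddCommGroup F] [NormedSpace 𝕜 F] (w : (F →L[𝕜] F)ˣ)
    {K : ℝ} (hK : 0 ≤ K) (h : ∀ u, ‖u‖ ≤ K * ‖(w : F →L[𝕜] F) u‖) :
    ‖(↑w⁻¹ : F →L[𝕜] F)‖ ≤ K :=
  ContinuousLinearMap.opNorm_le_bound _ hK fun v => by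
    simpa [← mul_apply_eq_comp] using h ((↑w⁻¹ : F →L[𝕜] F) v)

namespace MeasureTheory.Lp

variable {α : Type*} [MeasurableSpace α] {μ : Measure α} {p : ℝ≥0∞}

instance inst_s12 : PosSMulMono ℝ (Lp ℝ p μ) :=
  PosSMulMono.of_smul_nonneg fun t ht u hu => by
    rw [← Lp.coeFn_nonneg] at hu ⊢
    filter_upwards [hu, Lp.coeFn_smul t u] with x hx hsx
    simpa [hsx] using mul_nonneg ht hx

section PointwiseNorm

variable {E : Type*} [NormedAddCommGroup E]

noncomputable def pointwiseNorm (u : Lp E p μ) : Lp ℝ p μ := (Lp.memLp u).norm.toLp _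

theorem coeFn_pointwiseNorm (u : Lp E p μ) : ⇑(pointwiseNorm u) =ᵐ[μ] fun x => ‖u x‖ :=
  MemLp.coeFn_toLp _

theorem norm_pointwiseNorm (u : Lp E p μ) : ‖pointwiseNorm u‖ = ‖u‖ := by
  rw [Lp.norm_def, Lp.norm_def, eLpNorm_congr_ae (coeFn_pointwiseNorm u), eLpNorm_norm]

theorem pointwiseNorm_nonneg (u : Lp E p μ) : 0 ≤ pointwiseNorm u := by
  rw [← Lp.coeFn_nonneg]
  filter_upwards [coeFn_pointwiseNorm u] with x hx
  simp [hx]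

theorem norm_le_of_ae_norm_le [Fact (1 ≤ p)] {A : Lp ℝ p μ →L[ℝ] Lp ℝ p μ}
    (hA : IsUnit (1 - A)) (hR : PreservesNonneg (Ring.inverse (1 - A))) {u w : Lp E p μ}
    {K : ℝ} (hK : 0 ≤ K) (h : ∀ᵐ x ∂μ, ‖u x‖ ≤ A (pointwiseNorm u) x + K * ‖w x‖) :
    ‖u‖ ≤ ‖Ring.inverse (1 - A)‖ * (K * ‖w‖) := by
  have hle : pointwiseNorm u ≤ A (pointwiseNorm u) + K • pointwiseNorm w := by
    rw [← Lp.coeFn_le]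
    filter_upwards [h, coeFn_pointwiseNorm u, coeFn_pointwiseNorm w,
      Lp.coeFn_add (A (pointwiseNorm u)) (K • pointwiseNorm w),
      Lp.coeFn_smul K (pointwiseNorm w)] with x hx hu hw hadd hsmul
    rwa [hu, hadd, Pi.add_apply, hsmul, Pi.smul_apply, hw, smul_eq_mul]
  simpa [norm_pointwiseNorm, norm_smul, abs_of_nonneg hK] using
    norm_le_of_le_apply_add hA hR (pointwiseNorm_nonneg u) hle

end PointwiseNorm

section MultiplicationOperator

variable {𝕜 : Type*} [RCLike 𝕜] [Fact (1 ≤ p)]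

noncomputable def mulOp (g : α → 𝕜) (hg : MemLp g ∞ μ) : Lp 𝕜 p μ →L[𝕜] Lp 𝕜 p μ :=
  (ContinuousLinearMap.mul 𝕜 𝕜).holderL μ ∞ p p (hg.toLp g)

theorem coeFn_mulOp {g : α → 𝕜} (hg : MemLp g ∞ μ) (u : Lp 𝕜 p μ) :
    ⇑(mulOp g hg u) =ᵐ[μ] fun x => g x * u x := by
  filter_upwards [ContinuousLinearMap.coeFn_holder (r := p) (ContinuousLinearMap.mul 𝕜 𝕜)
    (hg.toLp g) u, hg.coeFn_toLp] with x hx hgx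
  simp [mulOp, hx, hgx]

theorem isUnit_mulOp {g : α → 𝕜} (hg : MemLp g ∞ μ) {c : ℝ} (hc : 0 < c)
    (hgc : ∀ᵐ x ∂μ, c ≤ ‖g x‖) : IsUnit (mulOp (p := p) g hg) := by
  have hg' : MemLp (fun x => (g x)⁻¹) ∞ μ :=
    memLp_top_of_bound hg.1.aemeasurable.inv.aestronglyMeasurable c⁻¹
      (hgc.mono fun x hx => by rw [norm_inv]; exact inv_anti₀ hc hx)
  refine ⟨⟨mulOp g hg, mulOp _ hg', ?_, ?_⟩, rfl⟩ <;>
  · ext1 u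
    refine Lp.ext ?_
    filter_upwards [coeFn_mulOp hg u, coeFn_mulOp hg' u, coeFn_mulOp hg (mulOp _ hg' u),
      coeFn_mulOp hg' (mulOp g hg u), hgc] with x h1 h2 h3 h4 hx
    have : g x ≠ 0 := norm_pos_iff.1 (hc.trans_le hx)
    simp [h1, h2, h3, h4, this]

end MultiplicationOperator

end MeasureTheory.Lp

theorem Complex.norm_le_of_mul_eq_add {z u w I : ℂ} {a c s j : ℝ} (hz : 0 ≤ z.re) (hc : 0 < c)
    (hca : c ≤ a) (hs : s ∈ Icc (0 : ℝ) 1) (hI : ‖I‖ ≤ j) (h : (z + a) * u = w + s * I) :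
    ‖u‖ ≤ j / a + c⁻¹ * ‖w‖ := by
  have ha : 0 < a := hc.trans_le hca
  have hza : a ≤ ‖z + a‖ := by
    simpa using (z + a).re_le_norm |>.trans' (by simp [hz] : a ≤ (z + a).re)
  have : a * ‖u‖ ≤ ‖w‖ + j := calc
    a * ‖u‖ ≤ ‖(z + a) * u‖ := by rw [norm_mul]; gcongr
    _ ≤ ‖w‖ + s * ‖I‖ := by
      rw [h]; refine (norm_add_le _ _).trans ?_
      simp [abs_of_nonneg hs.1]
    _ ≤ ‖w‖ + j := by gcongr; nlinarith [hs.2, norm_nonneg I]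
  calc ‖u‖ ≤ (‖w‖ + j) / a := by rw [le_div_iff₀ ha]; linarith
    _ ≤ j / a + c⁻¹ * ‖w‖ := by
      rw [add_div, add_comm]; gcongr; rw [div_eq_inv_mul]; gcongr

section KernelOperator

variable {α : Type*} [MeasurableSpace α] {ν : Measure α} {J : α → α → ℝ} {a : α → ℝ}
  {A : Lp ℝ 1 ν →L[ℝ] Lp ℝ 1 ν}

theorem preservesNonneg_of_ae_eq_integral_div (hJ : ∀ x y, 0 ≤ J x y) (ha : ∀ᵐ x ∂ν, 0 ≤ a x)
    (hA : ∀ u, ⇑(A u) =ᵐ[ν] fun x => (∫ y, J x y * u y ∂ν) / a x) : PreservesNonneg A := by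
  intro u hu
  rw [← Lp.coeFn_nonneg] at hu ⊢
  filter_upwards [hA u, ha] with x hAx hax
  rw [hAx]
  exact div_nonneg (integral_nonneg_of_ae (hu.mono fun y hy => mul_nonneg (hJ x y) hy)) hax

variable (hJ : ∀ x y, 0 ≤ J x y) (hA : ∀ u, ⇑(A u) =ᵐ[ν] fun x => (∫ y, J x y * u y ∂ν) / a x)
  (h1A : IsUnit (1 - A)) (hR : PreservesNonneg (Ring.inverse (1 - A)))
  {z : ℂ} (hz : 0 ≤ z.re) {c : ℝ} (hc : 0 < c)
include hJ hA h1A hR hz hc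

theorem norm_le_of_ae_eq_mul_sub_integral (hca : ∀ᵐ x ∂ν, c ≤ a x) {s : ℝ}
    (hs : s ∈ Icc (0 : ℝ) 1) {u w : Lp ℂ 1 ν}
    (hw : ⇑w =ᵐ[ν] fun x => (z + a x) * u x - s * ∫ y, (J x y : ℂ) * u y ∂ν) :
    ‖u‖ ≤ ‖Ring.inverse (1 - A)‖ * (c⁻¹ * ‖w‖) := by
  refine Lp.norm_le_of_ae_norm_le h1A hR (inv_nonneg.2 hc.le) ?_
  have hnorm : ∀ x, ∫ y, J x y * Lp.pointwiseNorm u y ∂ν = ∫ y, J x y * ‖u y‖ ∂ν := fun x =>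
    integral_congr_ae <| (Lp.coeFn_pointwiseNorm u).mono fun y hy => by simp [hy]
  filter_upwards [hw, hA (Lp.pointwiseNorm u), hca] with x hwx hAx hcx
  rw [hAx, hnorm]
  refine Complex.norm_le_of_mul_eq_add (I := ∫ y, (J x y : ℂ) * u y ∂ν) hz hc hcx hs ?_
    (by rw [hwx]; ring)
  refine (norm_integral_le_integral_norm _).trans_eq (integral_congr_ae ?_)
  exact .of_forall fun y => by simp [abs_of_nonneg (hJ x y)]

theorem isUnit_sub_of_ae_eq_integral (hca : ∀ᵐ x ∂ν, c ≤ a x)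
    {M T : Lp ℂ 1 ν →L[ℂ] Lp ℂ 1 ν} (hM : IsUnit M)
    (hMa : ∀ u, ⇑(M u) =ᵐ[ν] fun x => (z + a x) * u x)
    (hT : ∀ u, ⇑(T u) =ᵐ[ν] fun x => ∫ y, (J x y : ℂ) * u y ∂ν) : IsUnit (M - T) := by
  have hMT : ∀ (s : ℂ) u, ⇑((M - s • T) u) =ᵐ[ν]
      fun x => (z + a x) * u x - s * ∫ y, (J x y : ℂ) * u y ∂ν := fun s u => by
    filter_upwards [Lp.coeFn_sub (M u) (s • T u), Lp.coeFn_smul s (T u), hMa u, hT u]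
      with x h1 h2 h3 h4
    rw [sub_apply, smul_apply, h1, Pi.sub_apply, h2, Pi.smul_apply, h3, h4, smul_eq_mul]
  refine isUnit_sub_of_forall_norm_inv_le (𝕜 := ℂ) hM (K := ‖Ring.inverse (1 - A)‖ * c⁻¹) ?_
  rintro s hs w hw
  refine ContinuousLinearMap.norm_inv_le_of_forall_norm_le w (by positivity) fun u => ?_
  rw [mul_assoc]
  exact norm_le_of_ae_eq_mul_sub_integral hJ hA h1A hR hz hc hca hs (hw ▸ hMT s u)

theorem isUnit_algebraMap_sub_of_re_nonneg (ha : AEStronglyMeasurable a ν) {c' : ℝ}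
    (hca : ∀ᵐ x ∂ν, c ≤ a x ∧ a x ≤ c') {L : Lp ℂ 1 ν →L[ℂ] Lp ℂ 1 ν}
    (hL : ∀ u, ⇑(L u) =ᵐ[ν] fun x => (∫ y, (J x y : ℂ) * u y ∂ν) - a x * u x) :
    IsUnit (algebraMap ℂ _ z - L) := by
  have hMa : MemLp (fun x => (a x : ℂ)) ∞ ν :=
    memLp_top_of_bound (Complex.continuous_ofReal.comp_aestronglyMeasurable ha) c'
      (hca.mono fun x hx => by simpa [abs_of_pos (hc.trans_le hx.1)] using hx.2)
  have hMz : MemLp (fun x => z + a x) ∞ ν := (memLp_top_const z).add hMa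
  have hza : ∀ᵐ x ∂ν, c ≤ ‖z + a x‖ := hca.mono fun x hx => by
    have := (z + a x).re_le_norm
    simp only [Complex.add_re, Complex.ofReal_re] at this
    linarith
  have hT : ∀ u, ⇑((L + Lp.mulOp (p := 1) _ hMa) u) =ᵐ[ν]
      fun x => ∫ y, (J x y : ℂ) * u y ∂ν := fun u => by
    filter_upwards [Lp.coeFn_add (L u) (Lp.mulOp _ hMa u), hL u, Lp.coeFn_mulOp hMa u]
      with x h1 h2 h3
    rw [add_apply, h1, Pi.add_apply, h2, h3, sub_add_cancel]
  convert isUnit_sub_of_ae_eq_integral hJ hA h1A hR hz hc (hca.mono fun x hx => hx.1)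
    (Lp.isUnit_mulOp hMz hc hza) (Lp.coeFn_mulOp hMz) hT using 1
  ext1 u
  refine Lp.ext ?_
  filter_upwards [Lp.coeFn_sub (z • u) (L u), Lp.coeFn_smul z u,
    Lp.coeFn_sub (Lp.mulOp (p := 1) _ hMz u) ((L + Lp.mulOp (p := 1) _ hMa) u),
    Lp.coeFn_mulOp hMz u, hT u, hL u] with x h1 h2 h3 h4 h5 h6
  rw [Algebra.algebraMap_eq_smul_one, sub_apply, smul_apply, one_apply_eq_self, h1, Pi.sub_apply,
    h2, Pi.smul_apply, sub_apply, h3, Pi.sub_apply, h4, h5, h6, smul_eq_mul]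
  ring

end KernelOperator

theorem stmt_12_general
    (Ω : Set ℝ) (hΩ : MeasurableSet Ω)
    (a : ℝ → ℝ) (ha : Continuous a)
    (c c' : ℝ) (hc0 : 0 < c)
    (hbound : ∀ x ∈ Ω, c < a x ∧ a x < c')
    (J : ℝ → ℝ → ℝ)
    (hJnonneg : ∀ x y, 0 ≤ J x y)
    (𝒥 : Lp ℝ 1 (volume.restrict Ω) →L[ℝ] Lp ℝ 1 (volume.restrict Ω))
    (h𝒥 : ∀ u : Lp ℝ 1 (volume.restrict Ω),
      ⇑(𝒥 u) =ᵐ[volume.restrict Ω] fun x => ∫ y in Ω, J x y * u y)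
    (L : Lp ℝ 1 (volume.restrict Ω) →L[ℝ] Lp ℝ 1 (volume.restrict Ω))
    -- the operator A₀ u = (𝒥 u)/a
    (A0 : Lp ℝ 1 (volume.restrict Ω) →L[ℝ] Lp ℝ 1 (volume.restrict Ω))
    (hA0 : ∀ u : Lp ℝ 1 (volume.restrict Ω),
      ⇑(A0 u) =ᵐ[volume.restrict Ω] fun x => (𝒥 u) x / a x)
    (hspr : spectralRadius ℝ A0 < 1)
    -- the operator L acting on complex L¹(Ω)
    (Lc : Lp ℂ 1 (volume.restrict Ω) →L[ℂ] Lp ℂ 1 (volume.restrict Ω))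
    (hLc : ∀ u : Lp ℂ 1 (volume.restrict Ω),
      ⇑(Lc u) =ᵐ[volume.restrict Ω]
        fun x => (∫ y in Ω, (J x y : ℂ) * u y) - (a x : ℂ) * u x) :
    ∀ z ∈ spectrum ℂ Lc, z.re < 0 := by
  intro z hz
  by_contra! hz0
  have hac : ∀ᵐ x ∂volume.restrict Ω, c < a x ∧ a x < c' := (ae_restrict_mem hΩ).mono hbound
  have hA : ∀ u, ⇑(A0 u) =ᵐ[volume.restrict Ω] fun x => (∫ y in Ω, J x y * u y) / a x :=
    fun u => by filter_upwards [hA0 u, h𝒥 u] with x h1 h2; rw [h1, h2]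
  have hres := fun t => isUnit_smul_one_sub_of_spectralRadius_lt_one hspr (t := t)
  have hR := preservesNonneg_inverse_one_sub
    (preservesNonneg_of_ae_eq_integral_div hJnonneg (hac.mono fun x hx => (hc0.trans hx.1).le) hA)
    hres
  exact spectrum.notMem_iff.2 (isUnit_algebraMap_sub_of_re_nonneg hJnonneg hA
    (by simpa using hres 1 le_rfl) hR hz0 hc0 ha.aestronglyMeasurable
    (hac.mono fun x hx => ⟨hx.1.le, hx.2.le⟩) hLc) hz

/-- If spr(A₀) < 1, where A₀u = (𝒥u)/a, then every element z of the
spectrum of L acting on complex L¹(Ω) satisfies Re z < 0. -/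
theorem stmt_12
    (Ω : Set ℝ) (hΩ : MeasurableSet Ω)
    (a : ℝ → ℝ) (ha : Continuous a)
    (c c' : ℝ) (hc0 : 0 < c) (hcc' : c < c')
    (hbound : ∀ x ∈ Ω, c < a x ∧ a x < c')
    (J : ℝ → ℝ → ℝ) (hJmeas : Measurable (Function.uncurry J))
    (hJnonneg : ∀ x y, 0 ≤ J x y)
    (𝒥 : Lp ℝ 1 (volume.restrict Ω) →L[ℝ] Lp ℝ 1 (volume.restrict Ω))
    (h𝒥 : ∀ u : Lp ℝ 1 (volume.restrict Ω),
      ⇑(𝒥 u) =ᵐ[volume.restrict Ω] fun x => ∫ y in Ω, J x y * u y)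
    (L : Lp ℝ 1 (volume.restrict Ω) →L[ℝ] Lp ℝ 1 (volume.restrict Ω))
    (hL : ∀ u : Lp ℝ 1 (volume.restrict Ω),
      ⇑(L u) =ᵐ[volume.restrict Ω] fun x => (𝒥 u) x - a x * u x)
    -- the operator A₀ u = (𝒥 u)/a
    (A0 : Lp ℝ 1 (volume.restrict Ω) →L[ℝ] Lp ℝ 1 (volume.restrict Ω))
    (hA0 : ∀ u : Lp ℝ 1 (volume.restrict Ω),
      ⇑(A0 u) =ᵐ[volume.restrict Ω] fun x => (𝒥 u) x / a x)
    (hspr : spectralRadius ℝ A0 < 1)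
    -- the operator L acting on complex L¹(Ω)
    (Lc : Lp ℂ 1 (volume.restrict Ω) →L[ℂ] Lp ℂ 1 (volume.restrict Ω))
    (hLc : ∀ u : Lp ℂ 1 (volume.restrict Ω),
      ⇑(Lc u) =ᵐ[volume.restrict Ω]
        fun x => (∫ y in Ω, (J x y : ℂ) * u y) - (a x : ℂ) * u x) :
    ∀ z ∈ spectrum ℂ Lc, z.re < 0 :=
  stmt_12_general Ω hΩ a ha c c' hc0 hbound J hJnonneg 𝒥 h𝒥 L A0 hA0 hspr Lc hLc
end

section
/- Fix 0 < α < 1 and c′ > 0, and set c = 2∫_{−π}^{π} |θ|^{−α} dθ = 4π^{1−α}/(1−α). On the circle S¹, identified with [−π, π) with Lebesgue measure, let a(θ) = c|θ|^α + c′ and define the operator L on L¹(S¹) by (Lu)(θ) = (1/(2π))∫_{S¹} u(ω) dω − a(θ)u(θ). Then L has no eigenvalues: there is no μ ∈ ℝ and nonzero v ∈ L¹(S¹) with Lv = μv. -/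
open MeasureTheory ENNReal Set Real

/-!
An eigenfunction `v` for the eigenvalue `m` satisfies `(m + a) v = K`, where `K` is the mean of
`v`. As `m + a` vanishes at no more than two points, `K = 0` forces `v = 0`; otherwise
`v = K / (m + a)`, and integrating gives `∫ 1 / (m + a) = 2π`. With `κ = m + c'` this is
impossible: for `κ ≥ 0` we have `1 / (m + a) ≤ |θ|^(-α) / c`, whose integral is `1/2` by the
choice of `c`; if `m + a ≤ 0` everywhere the integral is nonpositive; otherwise `m + a` has a
zero `t ∈ (0, π)`, where by concavity of `θ ↦ θ^α` it vanishes at most linearly, so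
`1 / (m + a)` is not integrable near `t`.
-/

lemma rpow_sub_rpow_le_mul_sub {α s t : ℝ} (hα0 : 0 ≤ α) (hα1 : α ≤ 1) (ht : 0 < t)
    (hts : t ≤ s) : s ^ α - t ^ α ≤ α * t ^ (α - 1) * (s - t) := by
  have key := rpow_one_add_le_one_add_mul_self (s := (s - t) / t)
    (by linarith [div_nonneg (sub_nonneg.2 hts) ht.le]) hα0 hα1
  rw [one_add_div ht.ne', add_sub_cancel, div_rpow (by linarith) ht.le,
    div_le_iff₀ (by positivity)] at key
  have : (1 + α * ((s - t) / t)) * t ^ α = t ^ α + α * t ^ (α - 1) * (s - t) := by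
    rw [rpow_sub_one ht.ne']; field_simp
  linarith

section EvenFunction

variable {f : ℝ → ℝ} {b : ℝ}

lemma intervalIntegrable_comp_abs_of_nonneg (hb : 0 ≤ b)
    (hf : IntervalIntegrable f volume 0 b) :
    IntervalIntegrable (fun x => f |x|) volume 0 b :=
  (intervalIntegrable_congr fun x hx => by
    simp only [abs_of_pos (by simpa [hb] using hx.1 : 0 < x)]).2 hf

lemma intervalIntegrable_comp_abs_of_nonpos (hb : 0 ≤ b)
    (hf : IntervalIntegrable f volume 0 b) :
    IntervalIntegrable (fun x => f |x|) volume (-b) 0 := by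
  simpa using ((IntervalIntegrable.iff_comp_neg).1
    (intervalIntegrable_comp_abs_of_nonneg hb hf)).symm

lemma intervalIntegrable_comp_abs (hb : 0 ≤ b) (hf : IntervalIntegrable f volume 0 b) :
    IntervalIntegrable (fun x => f |x|) volume (-b) b :=
  (intervalIntegrable_comp_abs_of_nonpos hb hf).trans
    (intervalIntegrable_comp_abs_of_nonneg hb hf)

lemma integral_comp_abs_of_nonneg (hb : 0 ≤ b) (hf : IntervalIntegrable f volume 0 b) :
    ∫ x in -b..b, f |x| = 2 * ∫ x in 0..b, f x := by
  have h0b : ∫ x in 0..b, f |x| = ∫ x in 0..b, f x :=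
    intervalIntegral.integral_congr fun x hx => by
      simp only [abs_of_nonneg (by simpa [hb] using hx.1 : 0 ≤ x)]
  have hneg : ∫ x in -b..0, f |x| = ∫ x in 0..b, f |x| := by
    simpa using (intervalIntegral.integral_comp_neg (a := 0) (b := b) (fun x => f |x|)).symm
  rw [← intervalIntegral.integral_add_adjacent_intervals
    (intervalIntegrable_comp_abs_of_nonpos hb hf) (intervalIntegrable_comp_abs_of_nonneg hb hf),
    hneg, h0b]
  ring

end EvenFunction

lemma integrableOn_abs_rpow_neg {α b : ℝ} (hα1 : α < 1) (hb : 0 ≤ b) :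
    IntegrableOn (fun x : ℝ => |x| ^ (-α)) (Ico (-b) b) := by
  have := intervalIntegrable_comp_abs (f := fun x => x ^ (-α)) hb
    (intervalIntegral.intervalIntegrable_rpow' (by linarith))
  rw [intervalIntegrable_iff_integrableOn_Ioc_of_le (by linarith)] at this
  rwa [IntegrableOn, Measure.restrict_congr_set Ico_ae_eq_Ioc]

lemma setIntegral_abs_rpow_neg {α b : ℝ} (hα1 : α < 1) (hb : 0 ≤ b) :
    ∫ x in Ico (-b) b, |x| ^ (-α) = 2 * b ^ (1 - α) / (1 - α) := by
  rw [Measure.restrict_congr_set Ico_ae_eq_Ioc, ← intervalIntegral.integral_of_le (by linarith),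
    integral_comp_abs_of_nonneg (f := fun x => x ^ (-α)) hb
      (intervalIntegral.intervalIntegrable_rpow' (by linarith)),
    integral_rpow (Or.inl (by linarith)), zero_rpow (by linarith)]
  ring_nf

lemma ae_mul_abs_rpow_add_ne_zero {α c κ : ℝ} (hα : α ≠ 0) (hc : c ≠ 0) :
    ∀ᵐ θ : ℝ, c * |θ| ^ α + κ ≠ 0 := by
  have hsub : {θ : ℝ | ¬ c * |θ| ^ α + κ ≠ 0} ⊆ {(-κ / c) ^ α⁻¹, -(-κ / c) ^ α⁻¹} := by
    intro θ hθ
    have h : |θ| ^ α = -κ / c := by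
      rw [eq_div_iff hc]; simp only [ne_eq, not_not, mem_ofPred_eq] at hθ; linarith
    have hs : |θ| = (-κ / c) ^ α⁻¹ := by rw [← h, rpow_rpow_inv (abs_nonneg θ) hα]
    rcases (abs_eq (hs ▸ abs_nonneg θ)).1 hs with h | h <;> simp [h]
  exact ae_iff.2 (measure_mono_null hsub (((countable_singleton _).insert _).measure_zero _))

lemma not_integrableOn_inv_of_le_mul_sub {f : ℝ → ℝ} {t b K : ℝ} (htb : t < b)
    (hf : ∀ θ ∈ Ioo t b, 0 < f θ ∧ f θ ≤ K * (θ - t)) :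
    ¬ IntegrableOn (fun θ => (f θ)⁻¹) (Ioo t b) := by
  intro hint
  have hpole : IntegrableOn (fun θ => (θ - t)⁻¹) (Ioo t b) := by
    refine (hint.const_mul K).mono' (by fun_prop) ?_
    filter_upwards [ae_restrict_mem measurableSet_Ioo] with θ hθ
    obtain ⟨hpos, hle⟩ := hf θ hθ
    have hθt : 0 < θ - t := sub_pos.2 hθ.1
    rw [norm_of_nonneg (inv_nonneg.2 hθt.le), ← div_eq_mul_inv, le_div_iff₀ hpos,
      inv_mul_le_iff₀ hθt]
    linarith [mul_comm K (θ - t)]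
  rw [← intervalIntegrable_iff_integrableOn_Ioo_of_le htb.le, intervalIntegrable_sub_inv_iff]
    at hpole
  simp [htb.ne] at hpole

section KillingRate

variable {α b c κ : ℝ}

lemma setIntegral_inv_mul_abs_rpow_add_le (hα1 : α < 1) (hb : 0 ≤ b) (hc : 0 < c)
    (hκ : 0 ≤ κ) :
    ∫ θ in Ico (-b) b, (c * |θ| ^ α + κ)⁻¹ ≤ 2 * (b ^ (1 - α) / ((1 - α) * c)) := by
  have hbound : ∫ θ in Ico (-b) b, c⁻¹ * |θ| ^ (-α) = 2 * (b ^ (1 - α) / ((1 - α) * c)) := by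
    rw [integral_const_mul, setIntegral_abs_rpow_neg hα1 hb]; field_simp
  rw [← hbound]
  refine integral_mono_of_nonneg (ae_of_all _ fun θ => ?_)
    ((integrableOn_abs_rpow_neg hα1 hb).const_mul _) ?_
  · dsimp only; positivity
  · filter_upwards [ae_restrict_of_ae (Measure.ae_ne volume 0)] with θ hθ
    rw [rpow_neg (abs_nonneg θ), ← mul_inv]
    exact inv_anti₀ (by positivity) (by linarith)

lemma setIntegral_inv_mul_abs_rpow_add_nonpos (hα0 : 0 ≤ α) (hc : 0 ≤ c)
    (hκb : c * b ^ α + κ ≤ 0) :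
    ∫ θ in Ico (-b) b, (c * |θ| ^ α + κ)⁻¹ ≤ 0 := by
  refine setIntegral_nonpos measurableSet_Ico fun θ hθ => inv_nonpos.2 ?_
  have : |θ| ^ α ≤ b ^ α := rpow_le_rpow (abs_nonneg θ) (abs_le.2 ⟨hθ.1, hθ.2.le⟩) hα0
  nlinarith

lemma not_integrableOn_inv_mul_abs_rpow_add (hα0 : 0 < α) (hα1 : α ≤ 1) (hb : 0 ≤ b)
    (hc : 0 < c) (hκ : κ < 0) (hκb : 0 < c * b ^ α + κ) :
    ¬ IntegrableOn (fun θ => (c * |θ| ^ α + κ)⁻¹) (Ico (-b) b) := by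
  have hr : 0 < -κ / c := div_pos (neg_pos.2 hκ) hc
  set t := (-κ / c) ^ α⁻¹
  have ht0 : 0 < t := rpow_pos_of_pos hr _
  have htα : t ^ α = -κ / c := rpow_inv_rpow hr.le hα0.ne'
  have htb : t < b := by
    by_contra! hbt
    have := mul_le_mul_of_nonneg_left (rpow_le_rpow hb hbt hα0.le) hc.le
    rw [htα, mul_div_cancel₀ _ hc.ne'] at this
    linarith
  refine fun hint => not_integrableOn_inv_of_le_mul_sub htb (K := c * α * t ^ (α - 1))
    (fun θ hθ => ?_) (hint.mono_set fun x hx => ⟨by linarith [hx.1], hx.2⟩)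
  have hθ0 : 0 < θ := ht0.trans hθ.1
  have hform : c * |θ| ^ α + κ = c * (θ ^ α - t ^ α) := by
    rw [abs_of_pos hθ0, htα]; field_simp; ring
  rw [hform]
  refine ⟨mul_pos hc (sub_pos.2 (rpow_lt_rpow ht0.le hθ.1 hα0)), ?_⟩
  calc c * (θ ^ α - t ^ α) ≤ c * (α * t ^ (α - 1) * (θ - t)) :=
        mul_le_mul_of_nonneg_left (rpow_sub_rpow_le_mul_sub hα0.le hα1 ht0 hθ.1.le) hc.le
    _ = c * α * t ^ (α - 1) * (θ - t) := by ring

lemma setIntegral_inv_mul_abs_rpow_add_lt (hα0 : 0 < α) (hα1 : α < 1) (hb : 0 < b)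
    (hc : 0 < c) (hcb : b ^ (1 - α) / ((1 - α) * c) < b)
    (hint : IntegrableOn (fun θ => (c * |θ| ^ α + κ)⁻¹) (Ico (-b) b)) :
    ∫ θ in Ico (-b) b, (c * |θ| ^ α + κ)⁻¹ < 2 * b := by
  rcases le_or_gt 0 κ with hκ | hκ
  · linarith [setIntegral_inv_mul_abs_rpow_add_le hα1 hb.le hc hκ]
  rcases le_or_gt (c * b ^ α + κ) 0 with hκb | hκb
  · linarith [setIntegral_inv_mul_abs_rpow_add_nonpos hα0.le hc.le hκb]
  · exact absurd hint (not_integrableOn_inv_mul_abs_rpow_add hα0 hα1.le hb.le hc hκ hκb)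

end KillingRate

lemma integrable_inv_and_integral_inv_eq {X : Type*} [MeasurableSpace X] {μ : Measure X}
    {d v : X → ℝ} {K s : ℝ} (hK : K ≠ 0) (hv : Integrable v μ)
    (hdv : ∀ᵐ x ∂μ, d x * v x = K) (hmean : ∫ x, v x ∂μ = s * K) :
    Integrable (fun x => (d x)⁻¹) μ ∧ ∫ x, (d x)⁻¹ ∂μ = s := by
  have hinv : (fun x => K⁻¹ * v x) =ᵐ[μ] fun x => (d x)⁻¹ := by
    filter_upwards [hdv] with x hx
    exact eq_inv_of_mul_eq_one_left (by rw [mul_assoc, mul_comm (v x), hx, inv_mul_cancel₀ hK])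
  refine ⟨(hv.const_mul K⁻¹).congr hinv, ?_⟩
  rw [← integral_congr_ae hinv, integral_const_mul, hmean, mul_comm s, ← mul_assoc,
    inv_mul_cancel₀ hK, one_mul]

theorem stmt_19_general
    (α : ℝ) (hα0 : 0 < α) (hα1 : α < 1)
    (c' : ℝ) :
    ¬ ∃ (m : ℝ) (v : Lp ℝ 1 (volume.restrict (Set.Ico (-Real.pi) Real.pi))),
      v ≠ 0 ∧
      (∀ᵐ θ ∂(volume.restrict (Set.Ico (-Real.pi) Real.pi)),
        (1 / (2 * Real.pi)) * (∫ ω in Set.Ico (-Real.pi) Real.pi, v ω) -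
          (4 * Real.pi ^ (1 - α) / (1 - α) * |θ| ^ α + c') * v θ = m * v θ) := by
  rintro ⟨m, v, hv0, heq⟩
  set c := 4 * π ^ (1 - α) / (1 - α)
  set K := 1 / (2 * π) * ∫ ω in Ico (-π) π, v ω
  have hc : 0 < c := div_pos (by positivity) (by linarith)
  have hdv : ∀ᵐ θ ∂volume.restrict (Ico (-π) π), (c * |θ| ^ α + (m + c')) * v θ = K := by
    filter_upwards [heq] with θ h
    linear_combination -h
  have hK : K ≠ 0 := by
    intro hK
    refine hv0 (Lp.eq_zero_iff_ae_eq_zero.2 ?_)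
    filter_upwards [hdv, ae_restrict_of_ae (ae_mul_abs_rpow_add_ne_zero hα0.ne' hc.ne')]
      with θ h hne
    exact (mul_eq_zero.1 (h.trans hK)).resolve_left hne
  obtain ⟨hint, hval⟩ := integrable_inv_and_integral_inv_eq (s := 2 * π) hK
    (L1.integrable_coeFn v) hdv (by simp only [K]; field_simp)
  refine (setIntegral_inv_mul_abs_rpow_add_lt hα0 hα1 pi_pos hc ?_ hint).ne hval
  have hquarter : π ^ (1 - α) / ((1 - α) * c) = 1 / 4 := by
    have : 1 - α ≠ 0 := (sub_pos.2 hα1).ne'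
    simp only [c]; field_simp
  linarith [pi_gt_three]

/-- On the circle S¹ = [−π, π) with Lebesgue measure, with
c = 4π^{1−α}/(1−α) (= 2∫_{S¹}|θ|^{−α}dθ), a(θ) = c|θ|^α + c′ and
(Lu)(θ) = (1/(2π))∫_{S¹} u(ω) dω − a(θ)u(θ), the operator L has no eigenvalues:
there is no μ ∈ ℝ and nonzero v ∈ L¹(S¹) with Lv = μv. -/
theorem stmt_19
    (α : ℝ) (hα0 : 0 < α) (hα1 : α < 1)
    (c' : ℝ) (hc' : 0 < c') :
    ¬ ∃ (m : ℝ) (v : Lp ℝ 1 (volume.restrict (Set.Ico (-Real.pi) Real.pi))),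
      v ≠ 0 ∧
      (∀ᵐ θ ∂(volume.restrict (Set.Ico (-Real.pi) Real.pi)),
        (1 / (2 * Real.pi)) * (∫ ω in Set.Ico (-Real.pi) Real.pi, v ω) -
          (4 * Real.pi ^ (1 - α) / (1 - α) * |θ| ^ α + c') * v θ = m * v θ) :=
  stmt_19_general α hα0 hα1 c'
end
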